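/- arXiv:2105.01921 — 8 statements merged into one kernel-verified Lean document; each statement's English description precedes it below -/
import Mathlib

section
/- With the Section-3 field setup, the 3×3 matrices C = [[ξ, 0, η], [0, τ, 0], [η, 0, ξ]] and D = [[ξρ⁻², 0, ηρ], [0, τρ⁻², 0], [ηρ, 0, ξρ⁻²]] over GF(q) satisfy C·D = I₃ = D·C; consequently the 6×6 block matrix t₄ = [[0, C], [D, 0]] is an involution. -/
open Matrix

theorem stmt_4 (q : ℕ) (F : Type) [Field F] [Fintype F]
    (hF : Fintype.card F = q) (h6 : 6 ∣ q - 1)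
    (rho xi eta tau : F)
    (hrho : orderOf rho = 6)
    (hxi : xi = rho ^ 2 + (1 - rho ^ 2) * 2⁻¹)
    (heta : eta = (1 - rho ^ 2) * 2⁻¹)
    (htau : tau = rho ^ 4) :
    let C : Matrix (Fin 3) (Fin 3) F := !![xi, 0, eta; 0, tau, 0; eta, 0, xi]
    let D : Matrix (Fin 3) (Fin 3) F :=
      !![xi * (rho ^ 2)⁻¹, 0, eta * rho; 0, tau * (rho ^ 2)⁻¹, 0; eta * rho, 0, xi * (rho ^ 2)⁻¹]
    let t4 : Matrix (Fin 3 ⊕ Fin 3) (Fin 3 ⊕ Fin 3) F := fromBlocks 0 C D 0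
    C * D = 1 ∧ D * C = 1 ∧ orderOf t4 = 2 := by
  intro C D t4
  have hr6 : rho ^ 6 = 1 := by rw [← hrho]; exact pow_orderOf_eq_one rho
  have hr3ne : rho ^ 3 ≠ 1 := by
    intro h
    have := orderOf_dvd_of_pow_eq_one h
    rw [hrho] at this
    omega
  have hr3 : rho ^ 3 = -1 := by
    have hsq : rho ^ 3 * rho ^ 3 = 1 := by
      have : rho ^ 3 * rho ^ 3 = rho ^ 6 := by ring
      rw [this, hr6]
    rcases mul_self_eq_one_iff.mp hsq with h | h
    · exact absurd h hr3ne
    · exact h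
  have h2 : (2 : F) ≠ 0 := by
    intro h
    apply hr3ne
    rw [hr3]
    linear_combination -h
  have hinv : (rho ^ 2)⁻¹ = rho ^ 4 := by
    apply inv_eq_of_mul_eq_one_right
    have : rho ^ 2 * rho ^ 4 = rho ^ 6 := by ring
    rw [this, hr6]
  have hxe : xi = rho ^ 2 + eta := by rw [hxi, heta]
  have hs : (2 : F) * eta = 1 - rho ^ 2 := by
    rw [heta]; field_simp
  have hA : xi * (xi * rho ^ 4) + eta * (eta * rho) = 1 := by
    linear_combination ((xi + rho ^ 2 + eta) * rho ^ 4) * hxe +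
      (rho ^ 2 + 2 * eta) * hr6 + (eta ^ 2 * rho) * hr3 + hs
  have hB : xi * (eta * rho) + eta * (xi * rho ^ 4) = 0 := by
    linear_combination (xi * eta * rho) * hr3
  have hT : tau * (tau * rho ^ 4) = 1 := by
    linear_combination ((tau + rho ^ 4) * rho ^ 4) * htau + (rho ^ 6 + 1) * hr6
  have hCD : C * D = 1 := by
    ext i j
    fin_cases i <;> fin_cases j <;>
      simp [C, D, Matrix.mul_apply, Fin.sum_univ_three, Matrix.one_apply, hinv] <;>
      first
      | linear_combination hA
      | linear_combination hB
      | linear_combination hT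
  have hDC : D * C = 1 := by
    ext i j
    fin_cases i <;> fin_cases j <;>
      simp [C, D, Matrix.mul_apply, Fin.sum_univ_three, Matrix.one_apply, hinv] <;>
      first
      | linear_combination hA
      | linear_combination hB
      | linear_combination hT
  refine ⟨hCD, hDC, ?_⟩
  haveI : Fact (Nat.Prime 2) := ⟨by norm_num⟩
  apply orderOf_eq_prime
  · show t4 ^ 2 = 1
    have ht : t4 * t4 = fromBlocks (C * D) 0 0 (D * C) := by
      simp [t4, Matrix.fromBlocks_multiply]
    rw [sq, ht, hCD, hDC, Matrix.fromBlocks_one]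
  · intro h
    have h00 : t4 (Sum.inl 0) (Sum.inl 0) =
        (1 : Matrix (Fin 3 ⊕ Fin 3) (Fin 3 ⊕ Fin 3) F) (Sum.inl 0) (Sum.inl 0) := by
      rw [h]
    simp [t4, Matrix.fromBlocks, Matrix.one_apply] at h00
end

section
/- With the Section-3 field setup, the 3×3 matrix A = [[−μ, λ, −μ], [−λ, 0, λ], [−μ, −λ, −μ]] over GF(q) satisfies A² = [[0, 0, 1], [0, −1, 0], [1, 0, 0]], A⁴ = I₃ and A² ≠ I₃; hence A has order 4. Consequently, for t₁ the block-anti-diagonal 6×6 matrix with both off-diagonal blocks [[μ, λ, μ], [λ, 0, −λ], [μ, −λ, μ]] and t₂ = diag(−1, 1, −1, −1, 1, −1), the product t₁t₂ has order 4. -/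
open Matrix

theorem stmt_5 (q : ℕ) (F : Type) [Field F] [Fintype F]
    (hF : Fintype.card F = q) (h6 : 6 ∣ q - 1)
    (lam mu : F)
    (hlam : 2 * lam ^ 2 = 1) (hmu : 2 * mu ^ 2 - lam ^ 2 = 0) :
    let A : Matrix (Fin 3) (Fin 3) F := !![-mu, lam, -mu; -lam, 0, lam; -mu, -lam, -mu]
    let A1 : Matrix (Fin 3) (Fin 3) F := !![mu, lam, mu; lam, 0, -lam; mu, -lam, mu]
    let t1 : Matrix (Fin 3 ⊕ Fin 3) (Fin 3 ⊕ Fin 3) F := fromBlocks 0 A1 A1 0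
    let t2 : Matrix (Fin 3 ⊕ Fin 3) (Fin 3 ⊕ Fin 3) F :=
      fromBlocks (diagonal ![(-1 : F), 1, -1]) 0 0 (diagonal ![(-1 : F), 1, -1])
    A * A = !![0, 0, 1; 0, -1, 0; 1, 0, 0] ∧ A ^ 4 = 1 ∧ A ^ 2 ≠ 1 ∧
      orderOf A = 4 ∧ orderOf (t1 * t2) = 4 := by
  intro A A1 t1 t2
  have hAA : A * A = !![0, 0, 1; 0, -1, 0; 1, 0, 0] := by
    show (!![-mu, lam, -mu; -lam, 0, lam; -mu, -lam, -mu] : Matrix (Fin 3) (Fin 3) F) *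
      !![-mu, lam, -mu; -lam, 0, lam; -mu, -lam, -mu] = _
    ext i j
    fin_cases i <;> fin_cases j <;>
      simp [Matrix.mul_apply, Fin.sum_univ_three, Matrix.vecHead, Matrix.vecTail] <;>
      first
        | linear_combination hmu
        | linear_combination hlam
        | linear_combination hmu + hlam
        | linear_combination -hlam
  have hA4 : A ^ 4 = 1 := by
    have h : A ^ 4 = (A * A) * (A * A) := by
      rw [show (4 : ℕ) = 2 * 2 from rfl, pow_mul, sq, sq]
    rw [h, hAA]
    ext i j
    fin_cases i <;> fin_cases j <;>
      simp [Matrix.mul_apply, Fin.sum_univ_three, Matrix.one_apply, Matrix.vecHead,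
        Matrix.vecTail]
  have hA2 : A ^ 2 ≠ 1 := by
    rw [sq, hAA]
    intro h
    have h00 := congrFun (congrFun h 0) 0
    simp [Matrix.one_apply] at h00
  haveI : Fact (Nat.Prime 2) := ⟨Nat.prime_two⟩
  have hordA : orderOf A = 4 := by
    rw [show (4 : ℕ) = 2 ^ 2 from rfl]
    exact orderOf_eq_prime_pow (by rwa [pow_one])
      (by rw [show (2 : ℕ) ^ (1 + 1) = 4 from rfl]; exact hA4)
  refine ⟨hAA, hA4, hA2, hordA, ?_⟩
  have hA1D : A1 * diagonal ![(-1 : F), 1, -1] = A := by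
    show (!![mu, lam, mu; lam, 0, -lam; mu, -lam, mu] : Matrix (Fin 3) (Fin 3) F) *
        diagonal ![(-1 : F), 1, -1]
      = !![-mu, lam, -mu; -lam, 0, lam; -mu, -lam, -mu]
    ext i j
    fin_cases i <;> fin_cases j <;>
      simp [Matrix.mul_apply, Fin.sum_univ_three, Matrix.diagonal, Matrix.one_apply,
        Matrix.vecHead, Matrix.vecTail] <;> ring
  have ht : t1 * t2 = fromBlocks 0 A A 0 := by
    show fromBlocks 0 A1 A1 0 * fromBlocks (diagonal ![(-1 : F), 1, -1]) 0 0
        (diagonal ![(-1 : F), 1, -1]) = _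
    rw [Matrix.fromBlocks_multiply]
    simp [hA1D]
  have hB2 : (t1 * t2) ^ 2 = fromBlocks (A * A) 0 0 (A * A) := by
    rw [sq, ht, Matrix.fromBlocks_multiply]
    simp
  have hB4 : (t1 * t2) ^ 4 = 1 := by
    have h : (t1 * t2) ^ 4 = ((t1 * t2) ^ 2) * ((t1 * t2) ^ 2) := by
      rw [show (4 : ℕ) = 2 * 2 from rfl, pow_mul, sq]
    have hAA4 : (A * A) * (A * A) = 1 := by
      rw [show A * A = A ^ 2 from (sq A).symm, ← sq, ← pow_mul]; exact hA4
    rw [h, hB2, Matrix.fromBlocks_multiply]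
    simp only [Matrix.mul_zero, Matrix.zero_mul, add_zero, zero_add, hAA4]
    exact Matrix.fromBlocks_one
  have hB2ne : (t1 * t2) ^ 2 ≠ 1 := by
    rw [hB2, hAA]
    intro h
    have h00 := congrFun (congrFun h (Sum.inl 0)) (Sum.inl 0)
    simp [Matrix.one_apply, Matrix.fromBlocks] at h00
  rw [show (4 : ℕ) = 2 ^ 2 from rfl]
  exact orderOf_eq_prime_pow (by rwa [pow_one])
    (by rw [show (2 : ℕ) ^ (1 + 1) = 4 from rfl]; exact hB4)
end

section
/- With the Section-3 field setup, the 3×3 matrices A₁ = [[μ, λ, μ], [λ, 0, −λ], [μ, −λ, μ]] and B₃ = [[α, β, 0], [β, −α, 0], [0, 0, −1]] over GF(q) commute: A₁B₃ = B₃A₁. Consequently the 6×6 matrices t₁ (block-anti-diagonal with both off-diagonal blocks A₁) and t₃ (block-diagonal with both diagonal blocks B₃) commute: t₁t₃ = t₃t₁. -/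
open Matrix

theorem stmt_6 (q : ℕ) (F : Type) [Field F] [Fintype F]
    (hF : Fintype.card F = q) (h6 : 6 ∣ q - 1)
    (lam mu alpha beta : F)
    (hlam : 2 * lam ^ 2 = 1) (hmu : 2 * mu ^ 2 - lam ^ 2 = 0)
    (halpha : alpha = ((mu ^ 2)⁻¹ - 1)⁻¹)
    (hbeta : beta = 2 * alpha * lam * mu⁻¹) :
    let A1 : Matrix (Fin 3) (Fin 3) F := !![mu, lam, mu; lam, 0, -lam; mu, -lam, mu]
    let B3 : Matrix (Fin 3) (Fin 3) F := !![alpha, beta, 0; beta, -alpha, 0; 0, 0, -1]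
    let t1 : Matrix (Fin 3 ⊕ Fin 3) (Fin 3 ⊕ Fin 3) F := fromBlocks 0 A1 A1 0
    let t3 : Matrix (Fin 3 ⊕ Fin 3) (Fin 3 ⊕ Fin 3) F := fromBlocks B3 0 0 B3
    A1 * B3 = B3 * A1 ∧ t1 * t3 = t3 * t1 := by
  intro A1 B3 t1 t3
  -- basic field facts
  have hmusq : 4 * mu ^ 2 = 1 := by linear_combination 2 * hmu + hlam
  have hmu0 : mu ≠ 0 := by
    intro h
    rw [h] at hmusq
    simp at hmusq
  have h3 : (3 : F) ≠ 0 := by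
    intro h3
    have hdvd : ringChar F ∣ 3 := by
      have : ((3 : ℕ) : F) = 0 := by exact_mod_cast h3
      exact (CharP.cast_eq_zero_iff F (ringChar F) 3).mp this
    have hp : Nat.Prime (ringChar F) := CharP.char_is_prime F (ringChar F)
    have hp3 : ringChar F = 3 := (Nat.prime_dvd_prime_iff_eq hp (by norm_num)).mp hdvd
    obtain ⟨n, _, hcard⟩ := FiniteField.card F (ringChar F)
    rw [hp3] at hcard
    have hq : q = 3 ^ (n : ℕ) := by rw [← hF, hcard]
    have h3q : 3 ∣ q := by
      rw [hq]
      exact dvd_pow_self 3 n.pos.ne'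
    have h3q1 : 3 ∣ q - 1 := dvd_trans (by norm_num) h6
    have hq1 : 1 ≤ q := by rw [hq]; exact Nat.one_le_pow _ _ (by norm_num)
    omega
  have hinv : (mu ^ 2)⁻¹ = 4 := inv_eq_of_mul_eq_one_left hmusq
  have ha3 : 3 * alpha = 1 := by
    rw [halpha, hinv]
    norm_num
    exact mul_inv_cancel₀ h3
  have hb' : beta * mu = 2 * alpha * lam := by
    rw [hbeta]
    field_simp
  have key : A1 * B3 = B3 * A1 := by
    ext i j
    fin_cases i <;> fin_cases j <;>
      simp [A1, B3, Matrix.mul_apply, Fin.sum_univ_succ]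
    all_goals
      first
      | ring1
      | linear_combination hb'
      | linear_combination -hb'
      | linear_combination -hb' - lam * ha3
      | linear_combination hb' + lam * ha3
      | (apply mul_left_cancel₀ hmu0;
          linear_combination lam * hb' + mu ^ 2 * ha3 - 2 * alpha * hmu)
      | (apply mul_left_cancel₀ hmu0;
          linear_combination -lam * hb' - mu ^ 2 * ha3 + 2 * alpha * hmu)
  refine ⟨key, ?_⟩
  show fromBlocks 0 A1 A1 0 * fromBlocks B3 0 0 B3 =
    fromBlocks B3 0 0 B3 * fromBlocks 0 A1 A1 0
  rw [Matrix.fromBlocks_multiply, Matrix.fromBlocks_multiply]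
  simp [key]
end

section
/- Let q be an odd prime power not divisible by 3, and let α = 3⁻¹ ∈ GF(q) and β ∈ GF(q) with α² + β² = 1. Suppose there exists θ ∈ GF(q²) with θ² = 3⁻² − 1 such that −3⁻¹ + θ has multiplicative order q+1 in GF(q²)ˣ. Then the matrix Y = [[−α, −β], [β, −α]] has order q+1 in GL₂(GF(q)). -/
open Matrix

theorem stmt_7 (q : ℕ) (F : Type) [Field F] [Fintype F]
    (hF : Fintype.card F = q) (hodd : Odd q) (h3 : ¬ (3 ∣ q))
    (K : Type) [Field K] [Fintype K] [Algebra F K] (hK : Fintype.card K = q ^ 2)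
    (alpha beta : F)
    (halpha : alpha = (3 : F)⁻¹) (hab : alpha ^ 2 + beta ^ 2 = 1)
    (theta : K) (htheta : theta ^ 2 = algebraMap F K ((3 : F)⁻¹ ^ 2 - 1))
    (hord : orderOf (-(algebraMap F K (3 : F)⁻¹) + theta) = q + 1) :
    orderOf (!![-alpha, -beta; beta, -alpha] : Matrix (Fin 2) (Fin 2) F) = q + 1 := by
  have hq2 : 2 ≤ q := hF ▸ Fintype.one_lt_card
  set p := ringChar F with hp
  have hpprime : p.Prime := CharP.char_is_prime F p
  have hpq : p ∣ q := by
    have hz : (q : F) = 0 := by rw [← hF]; exact FiniteField.cast_card_eq_zero F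
    exact (CharP.cast_eq_zero_iff F p q).mp hz
  have halg : Function.Injective (algebraMap F K) := (algebraMap F K).injective
  -- beta ≠ 0
  have hbeta : beta ≠ 0 := by
    intro h
    rw [h] at hab
    have ha1 : alpha ^ 2 = 1 := by linear_combination hab
    have h3ne : (3:F) ≠ 0 := by
      intro h3z
      rw [halpha, h3z, _root_.inv_zero] at ha1
      simp at ha1
    rw [halpha] at ha1
    have h8 : (8:F) = 0 := by
      field_simp at ha1
      linear_combination -ha1
    have hp8 : p ∣ 8 := (CharP.cast_eq_zero_iff F p 8).mp h8
    have hp2 : p = 2 := by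
      have : p ∣ 2 ^ 3 := by norm_num at hp8 ⊢; exact hp8
      have := hpprime.dvd_of_dvd_pow this
      exact (Nat.prime_dvd_prime_iff_eq hpprime Nat.prime_two).mp this
    rw [hp2] at hpq
    rw [Nat.odd_iff] at hodd
    omega
  have hb : algebraMap F K beta ≠ 0 := fun h => hbeta (halg (by simpa using h))
  set j : K := theta / algebraMap F K beta with hjdef
  have hth2 : theta ^ 2 = -(algebraMap F K beta) ^ 2 := by
    rw [htheta]
    have h1 : (3:F)⁻¹ ^ 2 - 1 = -(beta ^ 2) := by rw [← halpha]; linear_combination hab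
    rw [h1, map_neg, map_pow]
  have hj2 : j ^ 2 = -1 := by
    rw [hjdef, div_pow, hth2]
    field_simp
  have hjb : algebraMap F K beta * j = theta := by
    rw [hjdef]; field_simp
  set lam : K := -(algebraMap F K (3:F)⁻¹) + theta with hlamdef
  have hlam : lam = algebraMap F K (-alpha) + algebraMap F K beta * j := by
    rw [hlamdef, hjb, map_neg, halpha]
  -- j is not in the image of F
  have hjr : ∀ x : F, algebraMap F K x ≠ j := by
    intro x hx
    have hlx : lam = algebraMap F K (-alpha + beta * x) := by
      rw [hlam, map_add, _root_.map_mul, hx]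
    have hlne : lam ≠ 0 := by
      intro h0
      have h1 : lam ^ (q + 1) = 1 := hord ▸ pow_orderOf_eq_one lam
      rw [h0, zero_pow (by omega : q + 1 ≠ 0)] at h1
      exact zero_ne_one h1
    have hxne : -alpha + beta * x ≠ 0 := by
      intro h0
      apply hlne
      rw [hlx, h0, _root_.map_zero]
    have hpow : lam ^ (q - 1) = 1 := by
      rw [hlx, ← map_pow, ← hF, FiniteField.pow_card_sub_one_eq_one _ hxne, _root_.map_one]
    have hdvd : q + 1 ∣ q - 1 := hord ▸ orderOf_dvd_of_pow_eq_one hpow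
    have := Nat.le_of_dvd (by omega) hdvd
    omega
  -- key induction
  have key : ∀ n : ℕ, ∃ a c : F,
      (!![-alpha, -beta; beta, -alpha] : Matrix (Fin 2) (Fin 2) F) ^ n = !![a, -c; c, a] ∧
      lam ^ n = algebraMap F K a + algebraMap F K c * j := by
    intro n
    induction n with
    | zero =>
      refine ⟨1, 0, ?_, ?_⟩
      · rw [pow_zero, Matrix.one_fin_two]; norm_num
      · simp
    | succ n ih =>
      obtain ⟨a, c, hY, hl⟩ := ih
      refine ⟨-(a * alpha) - c * beta, a * beta - c * alpha, ?_, ?_⟩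
      · rw [pow_succ, hY, Matrix.mul_fin_two]
        congr 1 <;> ring
      · rw [pow_succ, hl, hlam]
        simp only [map_sub, map_neg, _root_.map_mul, map_add]
        linear_combination (algebraMap F K c * algebraMap F K beta) * hj2
  rw [← hord, orderOf_eq_orderOf_iff]
  intro n
  obtain ⟨a, c, hY, hl⟩ := key n
  constructor
  · intro h
    rw [hY, Matrix.one_fin_two] at h
    have ha : a = 1 := by
      have := congr_fun (congr_fun h 0) 0; simpa using this
    have hc : c = 0 := by
      have := congr_fun (congr_fun h 1) 0; simpa using this
    rw [hl, ha, hc, _root_.map_one, _root_.map_zero]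
    ring
  · intro h
    rw [hl] at h
    have hc : c = 0 := by
      by_contra hcne
      apply hjr ((1 - a) * c⁻¹)
      rw [_root_.map_mul, map_sub, _root_.map_one, map_inv₀]
      have hcK : algebraMap F K c ≠ 0 := fun h0 => hcne (halg (by simpa using h0))
      field_simp
      linear_combination -h
    have ha : a = 1 := by
      apply halg
      rw [_root_.map_one]
      rw [hc, _root_.map_zero, zero_mul, add_zero] at h
      exact h
    rw [hY, ha, hc, Matrix.one_fin_two]
    norm_num
end

section
/- With the Section-3 field setup, the 6×6 matrices t₁ (block-anti-diagonal with both off-diagonal blocks A₁ = [[μ, λ, μ], [λ, 0, −λ], [μ, −λ, μ]]) and t₄ (block matrix [[0, C], [D, 0]] with C = [[ξ, 0, η], [0, τ, 0], [η, 0, ξ]] and D = [[ξρ⁻², 0, ηρ], [0, τρ⁻², 0], [ηρ, 0, ξρ⁻²]]) commute: t₁t₄ = t₄t₁; equivalently A₁D = CA₁ and A₁C = DA₁. -/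
open Matrix

theorem stmt_8 (q : ℕ) (F : Type) [Field F] [Fintype F]
    (hF : Fintype.card F = q) (h6 : 6 ∣ q - 1)
    (rho lam mu xi eta tau : F)
    (hrho : orderOf rho = 6)
    (hlam : 2 * lam ^ 2 = 1) (hmu : 2 * mu ^ 2 - lam ^ 2 = 0)
    (hxi : xi = rho ^ 2 + (1 - rho ^ 2) * 2⁻¹)
    (heta : eta = (1 - rho ^ 2) * 2⁻¹)
    (htau : tau = rho ^ 4) :
    let A1 : Matrix (Fin 3) (Fin 3) F := !![mu, lam, mu; lam, 0, -lam; mu, -lam, mu]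
    let C : Matrix (Fin 3) (Fin 3) F := !![xi, 0, eta; 0, tau, 0; eta, 0, xi]
    let D : Matrix (Fin 3) (Fin 3) F :=
      !![xi * (rho ^ 2)⁻¹, 0, eta * rho; 0, tau * (rho ^ 2)⁻¹, 0; eta * rho, 0, xi * (rho ^ 2)⁻¹]
    let t1 : Matrix (Fin 3 ⊕ Fin 3) (Fin 3 ⊕ Fin 3) F := fromBlocks 0 A1 A1 0
    let t4 : Matrix (Fin 3 ⊕ Fin 3) (Fin 3 ⊕ Fin 3) F := fromBlocks 0 C D 0
    A1 * D = C * A1 ∧ A1 * C = D * A1 ∧ t1 * t4 = t4 * t1 := by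
  intro A1 C D t1 t4
  have h2 : (2 : F) ≠ 0 := by
    intro h
    rw [h, zero_mul] at hlam
    exact zero_ne_one hlam
  have h6' : rho ^ 6 = 1 := by rw [← hrho]; exact pow_orderOf_eq_one rho
  have h3 : rho ^ 3 = -1 := by
    have hsq : (rho ^ 3 - 1) * (rho ^ 3 + 1) = 0 := by linear_combination h6'
    rcases mul_eq_zero.mp hsq with h | h
    · exfalso
      have h1 : rho ^ 3 = 1 := by linear_combination h
      have := orderOf_dvd_of_pow_eq_one h1
      rw [hrho] at this
      norm_num at this
    · linear_combination h
  have hinv : (rho ^ 2)⁻¹ = rho ^ 4 := by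
    refine inv_eq_of_mul_eq_one_right ?_
    rw [← pow_add]; exact h6'
  have hi2 : (2:F) * 2⁻¹ = 1 := mul_inv_cancel₀ h2
  have k1 : xi + eta = 1 := by
    linear_combination hxi + heta + (1 - rho ^ 2) * hi2
  have k2 : xi - eta = rho ^ 2 := by
    linear_combination hxi - heta
  have k3 : xi * rho ^ 4 + eta * rho = 1 := by
    linear_combination rho ^ 4 * hxi + rho * heta +
      (rho ^ 3 - 1 + 2⁻¹ * (1 - rho ^ 2) * rho) * h3
  have k4 : xi * rho ^ 4 - eta * rho = rho ^ 4 := by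
    linear_combination rho ^ 4 * hxi - rho * heta +
      (rho ^ 3 - rho + 2⁻¹ * (1 - rho ^ 2) * rho) * h3 - (1 - rho ^ 2) * rho * hi2
  have k5 : rho ^ 8 = rho ^ 2 := by
    linear_combination (rho ^ 5 - rho ^ 2) * h3
  have hAD : A1 * D = C * A1 := by
    show !![mu, lam, mu; lam, 0, -lam; mu, -lam, mu] *
        !![xi * (rho ^ 2)⁻¹, 0, eta * rho; 0, tau * (rho ^ 2)⁻¹, 0;
           eta * rho, 0, xi * (rho ^ 2)⁻¹] =
      !![xi, 0, eta; 0, tau, 0; eta, 0, xi] * !![mu, lam, mu; lam, 0, -lam; mu, -lam, mu]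
    rw [hinv, htau]
    ext i j
    fin_cases i <;> fin_cases j <;>
      simp [Matrix.mul_apply, Fin.sum_univ_succ] <;>
      first
        | ring1
        | linear_combination mu * k3 - mu * k1
        | linear_combination mu * k1 - mu * k3
        | linear_combination lam * k5 - lam * k2
        | linear_combination lam * k2 - lam * k5
        | linear_combination lam * k4
        | linear_combination (-lam) * k4
  have hAC : A1 * C = D * A1 := by
    show !![mu, lam, mu; lam, 0, -lam; mu, -lam, mu] *
        !![xi, 0, eta; 0, tau, 0; eta, 0, xi] =
      !![xi * (rho ^ 2)⁻¹, 0, eta * rho; 0, tau * (rho ^ 2)⁻¹, 0;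
         eta * rho, 0, xi * (rho ^ 2)⁻¹] * !![mu, lam, mu; lam, 0, -lam; mu, -lam, mu]
    rw [hinv, htau]
    ext i j
    fin_cases i <;> fin_cases j <;>
      simp [Matrix.mul_apply, Fin.sum_univ_succ] <;>
      first
        | ring1
        | linear_combination mu * k3 - mu * k1
        | linear_combination mu * k1 - mu * k3
        | linear_combination lam * k5 - lam * k2
        | linear_combination lam * k2 - lam * k5
        | linear_combination lam * k4
        | linear_combination (-lam) * k4
  refine ⟨hAD, hAC, ?_⟩
  show fromBlocks 0 A1 A1 0 * fromBlocks 0 C D 0 = fromBlocks 0 C D 0 * fromBlocks 0 A1 A1 0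
  rw [Matrix.fromBlocks_multiply, Matrix.fromBlocks_multiply]
  simp [hAD, hAC]
end

section
/- With the Section-3 field setup, the product t₃t₄ has order 4 in GL₆(GF(q)), where t₃ is the block-diagonal 6×6 matrix with both diagonal blocks B₃ = [[α, β, 0], [β, −α, 0], [0, 0, −1]] and t₄ = [[0, C], [D, 0]] with C = [[ξ, 0, η], [0, τ, 0], [η, 0, ξ]] and D = [[ξρ⁻², 0, ηρ], [0, τρ⁻², 0], [ηρ, 0, ξρ⁻²]]. -/
open Matrix

set_option maxHeartbeats 1600000 in
theorem stmt_9 (q : ℕ) (F : Type) [Field F] [Fintype F]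
    (hF : Fintype.card F = q) (h6 : 6 ∣ q - 1)
    (rho lam mu alpha beta xi eta tau : F)
    (hrho : orderOf rho = 6)
    (hlam : 2 * lam ^ 2 = 1) (hmu : 2 * mu ^ 2 - lam ^ 2 = 0)
    (halpha : alpha = ((mu ^ 2)⁻¹ - 1)⁻¹)
    (hbeta : beta = 2 * alpha * lam * mu⁻¹)
    (hxi : xi = rho ^ 2 + (1 - rho ^ 2) * 2⁻¹)
    (heta : eta = (1 - rho ^ 2) * 2⁻¹)
    (htau : tau = rho ^ 4) :
    let B3 : Matrix (Fin 3) (Fin 3) F := !![alpha, beta, 0; beta, -alpha, 0; 0, 0, -1]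
    let C : Matrix (Fin 3) (Fin 3) F := !![xi, 0, eta; 0, tau, 0; eta, 0, xi]
    let D : Matrix (Fin 3) (Fin 3) F :=
      !![xi * (rho ^ 2)⁻¹, 0, eta * rho; 0, tau * (rho ^ 2)⁻¹, 0; eta * rho, 0, xi * (rho ^ 2)⁻¹]
    let t3 : Matrix (Fin 3 ⊕ Fin 3) (Fin 3 ⊕ Fin 3) F := fromBlocks B3 0 0 B3
    let t4 : Matrix (Fin 3 ⊕ Fin 3) (Fin 3 ⊕ Fin 3) F := fromBlocks 0 C D 0
    orderOf (t3 * t4) = 4 := by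
  intro B3 C D t3 t4
  -- basic field facts
  have h2 : (2 : F) ≠ 0 := fun h => one_ne_zero (α := F) (by rw [← hlam, h]; ring)
  have hr6 : rho ^ 6 = 1 := by rw [← hrho]; exact pow_orderOf_eq_one rho
  have hr2ne : rho ^ 2 ≠ 1 := fun h => by
    have := orderOf_dvd_of_pow_eq_one h
    rw [hrho] at this
    norm_num at this
  have hr3ne : rho ^ 3 ≠ 1 := fun h => by
    have := orderOf_dvd_of_pow_eq_one h
    rw [hrho] at this
    norm_num at this
  have hr3 : rho ^ 3 = -1 := by
    have h1 : rho ^ 3 * rho ^ 3 = 1 := by rw [← pow_add]; exact hr6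
    rcases mul_self_eq_one_iff.mp h1 with h | h
    · exact absurd h hr3ne
    · exact h
  have hrne1 : rho ≠ -1 := fun h => hr2ne (by rw [h]; ring)
  have hq : rho ^ 2 = rho - 1 := by
    have h1 : (rho + 1) * (rho ^ 2 - rho + 1) = 0 := by linear_combination hr3
    rcases mul_eq_zero.mp h1 with h | h
    · exact absurd (eq_neg_of_add_eq_zero_left h) hrne1
    · linear_combination h
  have h3 : (3 : F) ≠ 0 := by
    intro h
    have h1 : (rho + 1) ^ 2 = 0 := by linear_combination hq + rho * h
    exact hrne1 (eq_neg_of_add_eq_zero_left (sq_eq_zero_iff.mp h1))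
  have hmu2 : 4 * mu ^ 2 = 1 := by linear_combination 2 * hmu + hlam
  have hmu2inv : (mu ^ 2)⁻¹ = 4 :=
    inv_eq_of_mul_eq_one_right (by linear_combination hmu2)
  have hmuinv : mu⁻¹ = 4 * mu :=
    inv_eq_of_mul_eq_one_right (by linear_combination hmu2)
  have ha : 3 * alpha = 1 := by
    rw [halpha, hmu2inv, show (4 : F) - 1 = 3 by norm_num]
    exact mul_inv_cancel₀ h3
  have hb : 9 * beta ^ 2 = 8 := by
    rw [hbeta, hmuinv]
    linear_combination (192 * alpha * lam ^ 2 * mu ^ 2 + 64 * lam ^ 2 * mu ^ 2) * ha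
      + 32 * mu ^ 2 * hlam + 8 * hmu2
  have hriv : ((rho ^ 2) : F)⁻¹ = -rho :=
    inv_eq_of_mul_eq_one_right (by linear_combination -hr3)
  have hx : 2 * xi = rho := by
    rw [hxi]; field_simp
    first
    | linear_combination -hq
    | linear_combination hq
    | linear_combination 2 * hq
    | linear_combination -2 * hq
  have he : 2 * eta = 2 - rho := by
    rw [heta]; field_simp
    first
    | linear_combination -hq
    | linear_combination hq
    | linear_combination 2 * hq
    | linear_combination -2 * hq
  have ht : tau = -rho := by
    rw [htau]; linear_combination (rho ^ 2 + rho) * hq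
  -- block computations
  have hN1 : (6 : F) • (!![alpha, beta, 0; beta, -alpha, 0; 0, 0, -1] *
      !![xi, 0, eta; 0, tau, 0; eta, 0, xi]) = !![(1 : F) * rho, (-6 : F) * rho * beta, (2 : F) + (-1 : F) * rho;
        (3 : F) * rho * beta, (2 : F) * rho, (6 : F) * beta + (-3 : F) * rho * beta;
        (-6 : F) + (3 : F) * rho, (0 : F), (-3 : F) * rho] := by
    ext i j
    fin_cases i <;> fin_cases j <;>
      simp [Matrix.mul_apply, Fin.sum_univ_three, Matrix.smul_apply, smul_eq_mul] <;>
      first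
      | ring1
      | linear_combination ((2 : F) * xi) * ha + ((1 : F)) * hx
      | linear_combination ((-2 : F) * xi) * ha + ((-1 : F)) * hx
      | linear_combination ((6 : F) * beta) * ht
      | linear_combination ((-6 : F) * beta) * ht
      | linear_combination ((2 : F) * eta) * ha + ((1 : F)) * he
      | linear_combination ((-2 : F) * eta) * ha + ((-1 : F)) * he
      | linear_combination ((3 : F) * beta) * hx
      | linear_combination ((-3 : F) * beta) * hx
      | linear_combination ((2 : F) * rho) * ha + ((-6 : F) * alpha) * ht
      | linear_combination ((-2 : F) * rho) * ha + ((6 : F) * alpha) * ht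
      | linear_combination ((3 : F) * beta) * he
      | linear_combination ((-3 : F) * beta) * he
      | linear_combination ((-3 : F)) * he
      | linear_combination ((3 : F)) * he
      | linear_combination ((-3 : F)) * hx
      | linear_combination ((3 : F)) * hx
  have hN2 : (6 : F) • (!![alpha, beta, 0; beta, -alpha, 0; 0, 0, -1] *
      !![xi * -rho, 0, eta * rho; 0, tau * -rho, 0; eta * rho, 0, xi * -rho]) = !![(1 : F) + (-1 : F) * rho, (-6 : F) * beta + (6 : F) * rho * beta, (1 : F) + (1 : F) * rho;
        (3 : F) * beta + (-3 : F) * rho * beta, (2 : F) + (-2 : F) * rho, (3 : F) * beta + (3 : F) * rho * beta;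
        (-3 : F) + (-3 : F) * rho, (0 : F), (-3 : F) + (3 : F) * rho] := by
    ext i j
    fin_cases i <;> fin_cases j <;>
      simp [Matrix.mul_apply, Fin.sum_univ_three, Matrix.smul_apply, smul_eq_mul] <;>
      first
      | ring1
      | linear_combination ((-1 : F)) * hq + ((-2 : F) * rho * xi) * ha + ((-1 : F) * rho) * hx
      | linear_combination ((1 : F)) * hq + ((2 : F) * rho * xi) * ha + ((1 : F) * rho) * hx
      | linear_combination ((6 : F) * beta) * hq + ((-6 : F) * rho * beta) * ht
      | linear_combination ((-6 : F) * beta) * hq + ((6 : F) * rho * beta) * ht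
      | linear_combination ((-1 : F)) * hq + ((2 : F) * rho * eta) * ha + ((1 : F) * rho) * he
      | linear_combination ((1 : F)) * hq + ((-2 : F) * rho * eta) * ha + ((-1 : F) * rho) * he
      | linear_combination ((-3 : F) * beta) * hq + ((-3 : F) * rho * beta) * hx
      | linear_combination ((3 : F) * beta) * hq + ((3 : F) * rho * beta) * hx
      | linear_combination ((-2 : F)) * hq + ((-2 : F) * rho ^ 2) * ha + ((6 : F) * rho * alpha) * ht
      | linear_combination ((2 : F)) * hq + ((2 : F) * rho ^ 2) * ha + ((-6 : F) * rho * alpha) * ht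
      | linear_combination ((-3 : F) * beta) * hq + ((3 : F) * rho * beta) * he
      | linear_combination ((3 : F) * beta) * hq + ((-3 : F) * rho * beta) * he
      | linear_combination ((3 : F)) * hq + ((-3 : F) * rho) * he
      | linear_combination ((-3 : F)) * hq + ((3 : F) * rho) * he
      | linear_combination ((3 : F)) * hq + ((3 : F) * rho) * hx
      | linear_combination ((-3 : F)) * hq + ((-3 : F) * rho) * hx
  have hPmul : (!![(1 : F) * rho, (-6 : F) * rho * beta, (2 : F) + (-1 : F) * rho;
        (3 : F) * rho * beta, (2 : F) * rho, (6 : F) * beta + (-3 : F) * rho * beta;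
        (-6 : F) + (3 : F) * rho, (0 : F), (-3 : F) * rho] *
      !![(1 : F) + (-1 : F) * rho, (-6 : F) * beta + (6 : F) * rho * beta, (1 : F) + (1 : F) * rho;
        (3 : F) * beta + (-3 : F) * rho * beta, (2 : F) + (-2 : F) * rho, (3 : F) * beta + (3 : F) * rho * beta;
        (-3 : F) + (-3 : F) * rho, (0 : F), (-3 : F) + (3 : F) * rho]) = !![(-24 : F), (-18 : F) * beta, (12 : F) + (-24 : F) * rho;
        (-18 : F) * beta, (-12 : F), (-18 : F) * beta + (36 : F) * rho * beta;
        (-12 : F) + (24 : F) * rho, (18 : F) * beta + (-36 : F) * rho * beta, (0 : F)] := by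
    ext i j
    fin_cases i <;> fin_cases j <;>
      simp [Matrix.mul_apply, Fin.sum_univ_three, Matrix.smul_apply, smul_eq_mul] <;>
      first
      | ring1
      | linear_combination ((18 : F)) * hq + ((-2 : F) * rho + (2 : F) * rho ^ 2) * hb
      | linear_combination ((-18 : F)) * hq + ((2 : F) * rho + (-2 : F) * rho ^ 2) * hb
      | linear_combination ((18 : F) * beta) * hq
      | linear_combination ((-18 : F) * beta) * hq
      | linear_combination ((-18 : F)) * hq + ((-2 : F) * rho + (-2 : F) * rho ^ 2) * hb
      | linear_combination ((18 : F)) * hq + ((2 : F) * rho + (2 : F) * rho ^ 2) * hb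
      | linear_combination ((12 : F)) * hq + ((-2 : F) * rho + (2 : F) * rho ^ 2) * hb
      | linear_combination ((-12 : F)) * hq + ((2 : F) * rho + (-2 : F) * rho ^ 2) * hb
      | linear_combination ((6 : F)) * hq
      | linear_combination ((-6 : F)) * hq
  have hQmul : (!![(1 : F) + (-1 : F) * rho, (-6 : F) * beta + (6 : F) * rho * beta, (1 : F) + (1 : F) * rho;
        (3 : F) * beta + (-3 : F) * rho * beta, (2 : F) + (-2 : F) * rho, (3 : F) * beta + (3 : F) * rho * beta;
        (-3 : F) + (-3 : F) * rho, (0 : F), (-3 : F) + (3 : F) * rho] *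
      !![(1 : F) * rho, (-6 : F) * rho * beta, (2 : F) + (-1 : F) * rho;
        (3 : F) * rho * beta, (2 : F) * rho, (6 : F) * beta + (-3 : F) * rho * beta;
        (-6 : F) + (3 : F) * rho, (0 : F), (-3 : F) * rho]) = !![(-24 : F), (-18 : F) * beta, (-12 : F) + (24 : F) * rho;
        (-18 : F) * beta, (-12 : F), (18 : F) * beta + (-36 : F) * rho * beta;
        (12 : F) + (-24 : F) * rho, (-18 : F) * beta + (36 : F) * rho * beta, (0 : F)] := by
    ext i j
    fin_cases i <;> fin_cases j <;>
      simp [Matrix.mul_apply, Fin.sum_univ_three, Matrix.smul_apply, smul_eq_mul] <;>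
      first
      | ring1
      | linear_combination ((18 : F)) * hq + ((-2 : F) * rho + (2 : F) * rho ^ 2) * hb
      | linear_combination ((-18 : F)) * hq + ((2 : F) * rho + (-2 : F) * rho ^ 2) * hb
      | linear_combination ((18 : F) * beta) * hq
      | linear_combination ((-18 : F) * beta) * hq
      | linear_combination ((-18 : F)) * hq + ((-4 : F) + (6 : F) * rho + (-2 : F) * rho ^ 2) * hb
      | linear_combination ((18 : F)) * hq + ((4 : F) + (-6 : F) * rho + (2 : F) * rho ^ 2) * hb
      | linear_combination ((12 : F)) * hq + ((-2 : F) * rho + (2 : F) * rho ^ 2) * hb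
      | linear_combination ((-12 : F)) * hq + ((2 : F) * rho + (-2 : F) * rho ^ 2) * hb
      | linear_combination ((6 : F)) * hq
      | linear_combination ((-6 : F)) * hq
  have hP2 : (!![(-24 : F), (-18 : F) * beta, (12 : F) + (-24 : F) * rho;
        (-18 : F) * beta, (-12 : F), (-18 : F) * beta + (36 : F) * rho * beta;
        (-12 : F) + (24 : F) * rho, (18 : F) * beta + (-36 : F) * rho * beta, (0 : F)] *
      !![(-24 : F), (-18 : F) * beta, (12 : F) + (-24 : F) * rho;
        (-18 : F) * beta, (-12 : F), (-18 : F) * beta + (36 : F) * rho * beta;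
        (-12 : F) + (24 : F) * rho, (18 : F) * beta + (-36 : F) * rho * beta, (0 : F)]) = ((1296 : F) • (1 : Matrix (Fin 3) (Fin 3) F)) := by
    ext i j
    fin_cases i <;> fin_cases j <;>
      simp [Matrix.mul_apply, Fin.sum_univ_three, Matrix.smul_apply, smul_eq_mul, Matrix.one_apply] <;>
      first
      | ring1
      | linear_combination ((-576 : F)) * hq + ((36 : F)) * hb
      | linear_combination ((576 : F)) * hq + ((-36 : F)) * hb
      | linear_combination ((864 : F) * beta) * hq
      | linear_combination ((-864 : F) * beta) * hq
      | linear_combination ((36 : F) + (-72 : F) * rho) * hb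
      | linear_combination ((-36 : F) + (72 : F) * rho) * hb
      | linear_combination ((-1152 : F)) * hq + ((144 : F) * rho + (-144 : F) * rho ^ 2) * hb
      | linear_combination ((1152 : F)) * hq + ((-144 : F) * rho + (144 : F) * rho ^ 2) * hb
      | linear_combination ((-1728 : F)) * hq + ((-36 : F) + (144 : F) * rho + (-144 : F) * rho ^ 2) * hb
      | linear_combination ((1728 : F)) * hq + ((36 : F) + (-144 : F) * rho + (144 : F) * rho ^ 2) * hb
  have hQ2 : (!![(-24 : F), (-18 : F) * beta, (-12 : F) + (24 : F) * rho;
        (-18 : F) * beta, (-12 : F), (18 : F) * beta + (-36 : F) * rho * beta;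
        (12 : F) + (-24 : F) * rho, (-18 : F) * beta + (36 : F) * rho * beta, (0 : F)] *
      !![(-24 : F), (-18 : F) * beta, (-12 : F) + (24 : F) * rho;
        (-18 : F) * beta, (-12 : F), (18 : F) * beta + (-36 : F) * rho * beta;
        (12 : F) + (-24 : F) * rho, (-18 : F) * beta + (36 : F) * rho * beta, (0 : F)]) = ((1296 : F) • (1 : Matrix (Fin 3) (Fin 3) F)) := by
    ext i j
    fin_cases i <;> fin_cases j <;>
      simp [Matrix.mul_apply, Fin.sum_univ_three, Matrix.smul_apply, smul_eq_mul, Matrix.one_apply] <;>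
      first
      | ring1
      | linear_combination ((-576 : F)) * hq + ((36 : F)) * hb
      | linear_combination ((576 : F)) * hq + ((-36 : F)) * hb
      | linear_combination ((864 : F) * beta) * hq
      | linear_combination ((-864 : F) * beta) * hq
      | linear_combination ((-36 : F) + (72 : F) * rho) * hb
      | linear_combination ((36 : F) + (-72 : F) * rho) * hb
      | linear_combination ((-1152 : F)) * hq + ((144 : F) * rho + (-144 : F) * rho ^ 2) * hb
      | linear_combination ((1152 : F)) * hq + ((-144 : F) * rho + (144 : F) * rho ^ 2) * hb
      | linear_combination ((-1728 : F)) * hq + ((-36 : F) + (144 : F) * rho + (-144 : F) * rho ^ 2) * hb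
      | linear_combination ((1728 : F)) * hq + ((36 : F) + (-144 : F) * rho + (144 : F) * rho ^ 2) * hb
  have h6ne : (6 : F) ≠ 0 := by
    have : (6 : F) = 2 * 3 := by norm_num
    rw [this]; exact mul_ne_zero h2 h3
  have h36ne : (36 : F) ≠ 0 := by
    have : (36 : F) = 6 * 6 := by norm_num
    rw [this]; exact mul_ne_zero h6ne h6ne
  have ht3 : t3 = fromBlocks B3 0 0 B3 := rfl
  have ht4 : t4 = fromBlocks 0 C D 0 := rfl
  have hB3l : B3 = !![alpha, beta, 0; beta, -alpha, 0; 0, 0, -1] := rfl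
  have hCl : C = !![xi, 0, eta; 0, tau, 0; eta, 0, xi] := rfl
  have hDl : D = !![xi * -rho, 0, eta * rho; 0, tau * -rho, 0; eta * rho, 0, xi * -rho] := by
    have h : D = !![xi * (rho ^ 2)⁻¹, 0, eta * rho; 0, tau * (rho ^ 2)⁻¹, 0;
        eta * rho, 0, xi * (rho ^ 2)⁻¹] := rfl
    rw [h, hriv]
  have hBC : B3 * C = (6 : F)⁻¹ • !![(1 : F) * rho, (-6 : F) * rho * beta, (2 : F) + (-1 : F) * rho;
        (3 : F) * rho * beta, (2 : F) * rho, (6 : F) * beta + (-3 : F) * rho * beta;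
        (-6 : F) + (3 : F) * rho, (0 : F), (-3 : F) * rho] := by
    rw [← hN1, ← hB3l, ← hCl, inv_smul_smul₀ h6ne]
  have hBD : B3 * D = (6 : F)⁻¹ • !![(1 : F) + (-1 : F) * rho, (-6 : F) * beta + (6 : F) * rho * beta, (1 : F) + (1 : F) * rho;
        (3 : F) * beta + (-3 : F) * rho * beta, (2 : F) + (-2 : F) * rho, (3 : F) * beta + (3 : F) * rho * beta;
        (-3 : F) + (-3 : F) * rho, (0 : F), (-3 : F) + (3 : F) * rho] := by
    rw [← hN2, ← hB3l, ← hDl, inv_smul_smul₀ h6ne]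
  have hblkP : (B3 * C) * (B3 * D) = (36 : F)⁻¹ • !![(-24 : F), (-18 : F) * beta, (12 : F) + (-24 : F) * rho;
        (-18 : F) * beta, (-12 : F), (-18 : F) * beta + (36 : F) * rho * beta;
        (-12 : F) + (24 : F) * rho, (18 : F) * beta + (-36 : F) * rho * beta, (0 : F)] := by
    rw [hBC, hBD, smul_mul_smul_comm, hPmul]
    congr 1
    rw [← mul_inv]
    norm_num
  have hblkQ : (B3 * D) * (B3 * C) = (36 : F)⁻¹ • !![(-24 : F), (-18 : F) * beta, (-12 : F) + (24 : F) * rho;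
        (-18 : F) * beta, (-12 : F), (18 : F) * beta + (-36 : F) * rho * beta;
        (12 : F) + (-24 : F) * rho, (-18 : F) * beta + (36 : F) * rho * beta, (0 : F)] := by
    rw [hBC, hBD, smul_mul_smul_comm, hQmul]
    congr 1
    rw [← mul_inv]
    norm_num
  have hM : t3 * t4 = fromBlocks 0 (B3 * C) (B3 * D) 0 := by
    rw [ht3, ht4, fromBlocks_multiply]
    simp only [Matrix.mul_zero, Matrix.zero_mul, add_zero, zero_add]
  have hM2 : (t3 * t4) ^ 2 = fromBlocks ((B3 * C) * (B3 * D)) 0 0 ((B3 * D) * (B3 * C)) := by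
    rw [sq, hM, fromBlocks_multiply]
    simp only [Matrix.mul_zero, Matrix.zero_mul, add_zero, zero_add]
  have h4 : (t3 * t4) ^ 4 = 1 := by
    rw [show (t3 * t4) ^ 4 = ((t3 * t4) ^ 2) ^ 2 from by rw [← pow_mul], hM2, sq, fromBlocks_multiply]
    simp only [Matrix.mul_zero, Matrix.zero_mul, add_zero, zero_add]
    rw [hblkP, hblkQ, smul_mul_smul_comm, smul_mul_smul_comm, hP2, hQ2]
    have hc : ((36 : F)⁻¹ * (36 : F)⁻¹) • ((1296 : F) • (1 : Matrix (Fin 3) (Fin 3) F)) = 1 := by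
      rw [smul_smul]
      have : (36 : F)⁻¹ * (36 : F)⁻¹ * 1296 = 1 := by
        rw [← mul_inv, show (36 : F) * 36 = 1296 by norm_num]
        exact inv_mul_cancel₀ (by rw [show (1296 : F) = 36 * 36 by norm_num]; exact mul_ne_zero h36ne h36ne)
      rw [this, one_smul]
    rw [hc, ← fromBlocks_one]
  have hne2 : (t3 * t4) ^ 2 ≠ 1 := by
    rw [hM2, hblkP, hblkQ]
    intro hcon
    have h0 := congrFun (congrFun hcon (Sum.inl 2)) (Sum.inl 2)
    simp [Matrix.fromBlocks_apply₁₁, Matrix.one_apply, Matrix.smul_apply] at h0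
  haveI : Fact (Nat.Prime 2) := ⟨Nat.prime_two⟩
  have key := orderOf_eq_prime_pow (x := t3 * t4) (p := 2) (n := 1)
    (by rw [pow_one]; exact hne2) (by rw [show (2 : ℕ) ^ (1 + 1) = 4 from rfl]; exact h4)
  rw [key]
  norm_num
end

section
/- With the Section-4 setup, each of the 6×6 matrices t₁, t₂, t₃, t₄ and r is an involution in GL₆(GF(p)); in particular A₁² = I₃ where A₁ = [[0, α, −αρ], [α, ρ, 1], [−αρ, 1, ρ²]], B₃² = I₃ where B₃ = [[1, λ, ε], [λ, γ, β], [ε, β, δ]], and [[a, x], [x, b]]·[[c, y], [y, d]] = I₂. -/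
open Matrix

set_option maxHeartbeats 1600000 in
theorem stmt_15 (p : ℕ) [Fact p.Prime] (hp3 : p % 3 = 1) (hp8 : p % 8 = 5)
    (rho iota alpha lam eps beta gamma delta mu a x y b c d : ZMod p)
    (hrho : orderOf rho = 3)
    (hiota : iota ^ 2 = -1)
    (halpha : alpha ^ 2 = (1 + rho ^ 2)⁻¹)
    (hlam : lam = alpha * (iota + 1) * (-1 + rho - iota * rho ^ 2))
    (heps : eps = -iota * lam)
    (hbeta : beta = -2⁻¹ * lam ^ 2 * iota)
    (hgamma : gamma = 2⁻¹ * lam ^ 2 - 1)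
    (hdelta : delta = -1 - 2⁻¹ * lam ^ 2)
    (hmu : mu = 1 - rho)
    (ha : a = 2 * (2 * rho ^ 2 + (1 - rho) * iota)⁻¹)
    (hx : x = -2⁻¹ * a * rho * (1 - rho))
    (hy : y = -x * rho)
    (hb : b = a⁻¹ * (rho ^ 2 + x ^ 2))
    (hc : c = a⁻¹ * (1 + x ^ 2 * rho))
    (hd : d = a * rho) :
    let A1 : Matrix (Fin 3) (Fin 3) (ZMod p) :=
      !![0, alpha, -alpha * rho; alpha, rho, 1; -alpha * rho, 1, rho ^ 2]
    let B3 : Matrix (Fin 3) (Fin 3) (ZMod p) :=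
      !![1, lam, eps; lam, gamma, beta; eps, beta, delta]
    let t1 : Matrix (Fin 3 ⊕ Fin 3) (Fin 3 ⊕ Fin 3) (ZMod p) := fromBlocks 0 A1 A1 0
    let t2 : Matrix (Fin 3 ⊕ Fin 3) (Fin 3 ⊕ Fin 3) (ZMod p) :=
      fromBlocks (diagonal ![(1 : ZMod p), -1, -1]) 0 0 (diagonal ![(1 : ZMod p), -1, -1])
    let t3 : Matrix (Fin 3 ⊕ Fin 3) (Fin 3 ⊕ Fin 3) (ZMod p) := fromBlocks B3 0 0 B3
    let t4 : Matrix (Fin 3 ⊕ Fin 3) (Fin 3 ⊕ Fin 3) (ZMod p) :=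
      fromBlocks 0 !![-rho, 0, 0; 0, 0, rho; 0, rho, -mu * rho ^ 2]
        !![-rho ^ 2, 0, 0; 0, mu, rho ^ 2; 0, rho ^ 2, 0] 0
    let r : Matrix (Fin 3 ⊕ Fin 3) (Fin 3 ⊕ Fin 3) (ZMod p) :=
      fromBlocks 0 !![rho, 0, 0; 0, a, x; 0, x, b] !![rho ^ 2, 0, 0; 0, c, y; 0, y, d] 0
    orderOf t1 = 2 ∧ orderOf t2 = 2 ∧ orderOf t3 = 2 ∧ orderOf t4 = 2 ∧ orderOf r = 2 ∧
      A1 * A1 = 1 ∧ B3 * B3 = 1 ∧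
      (!![a, x; x, b] * !![c, y; y, d] : Matrix (Fin 2) (Fin 2) (ZMod p)) = 1 := by
  haveI : Fact (Nat.Prime 2) := ⟨Nat.prime_two⟩
  subst heps hbeta hgamma hdelta hmu
  -- basic scalar facts
  have hp2 : (2 : ZMod p) ≠ 0 := by
    intro h
    have h2 : (p : ℕ) ∣ 2 := by
      have : ((2 : ℕ) : ZMod p) = 0 := by exact_mod_cast h
      exact (ZMod.natCast_eq_zero_iff 2 p).mp this
    have hpp : p = 2 := (Nat.prime_dvd_prime_iff_eq (Fact.out) Nat.prime_two).mp h2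
    rw [hpp] at hp8
    norm_num at hp8
  have h2 : (2 : ZMod p) * 2⁻¹ = 1 := mul_inv_cancel₀ hp2
  have hr3 : rho ^ 3 = 1 := by rw [← hrho]; exact pow_orderOf_eq_one rho
  have hrne1 : rho ≠ 1 := by
    intro h; rw [h] at hrho; simp at hrho
  have hsum : rho ^ 2 + rho + 1 = 0 := by
    rcases mul_eq_zero.mp (show (rho - 1) * (rho ^ 2 + rho + 1) = 0 by
      linear_combination hr3) with h | h
    · exact absurd (sub_eq_zero.mp h) hrne1
    · exact h
  have hrne0 : rho ≠ 0 := by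
    intro h; rw [h] at hr3; simp at hr3
  have hrinv : rho⁻¹ = rho ^ 2 := inv_eq_of_mul_eq_one_right (by linear_combination hr3)
  have ha2 : alpha ^ 2 = -rho ^ 2 := by
    rw [halpha, show (1 + rho ^ 2) = -rho by linear_combination hsum, inv_neg, hrinv]
  have hane0 : alpha ≠ 0 := by
    intro h
    apply hrne0
    have h2' : rho ^ 2 = 0 := by linear_combination ha2 - alpha * h
    exact pow_eq_zero_iff (by norm_num) |>.mp h2'
  have hione : iota + 1 ≠ 0 := by
    intro h
    exact hp2 (by linear_combination hiota - (iota - 1) * h)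
  have hthird : (-1 + rho - iota * rho ^ 2) ≠ 0 := by
    intro h
    have h2r : (2 : ZMod p) * rho = 0 := by
      linear_combination (1 - rho - iota * rho ^ 2) * h - rho ^ 4 * hiota + rho * hr3 + hsum
    rcases mul_eq_zero.mp h2r with h' | h'
    · exact hp2 h'
    · exact hrne0 h'
  have hlamne : lam ≠ 0 := by
    rw [hlam]; exact mul_ne_zero (mul_ne_zero hane0 hione) hthird
  have hs : (2 * rho ^ 2 + (1 - rho) * iota) ≠ 0 := by
    intro h
    exact hrne0 (by
      linear_combination (2 * rho ^ 2 - (1 - rho) * iota) * h + (1 - rho) ^ 2 * hiota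
        - 4 * rho * hr3 - hsum)
  have hane : a ≠ 0 := by rw [ha]; exact mul_ne_zero hp2 (inv_ne_zero hs)
  have hAC : a * c = 1 + x ^ 2 * rho := by
    rw [hc, ← mul_assoc, mul_inv_cancel₀ hane, one_mul]
  have hAB : a * b = rho ^ 2 + x ^ 2 := by
    rw [hb, ← mul_assoc, mul_inv_cancel₀ hane, one_mul]
  have e1 : a * c + x * y = 1 := by linear_combination hAC + x * hy
  have e2 : a * y + x * d = 0 := by linear_combination a * hy + x * hd
  have e3 : x * c + b * y = 0 := by
    have h' : a * (x * c + b * y) = a * 0 := by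
      rw [mul_zero]
      linear_combination x * hAC + y * hAB + (rho ^ 2 + x ^ 2) * hy - x * hr3
    exact mul_left_cancel₀ hane h'
  have e4 : x * y + b * d = 1 := by
    have h' : a * (x * y + b * d) = a * 1 := by
      linear_combination d * hAB + (rho ^ 2 + x ^ 2) * hd + a * x * hy + a * hr3
    exact mul_left_cancel₀ hane h'
  -- block identities
  have hA1sq : (!![0, alpha, -alpha * rho; alpha, rho, 1; -alpha * rho, 1, rho ^ 2] *
      !![0, alpha, -alpha * rho; alpha, rho, 1; -alpha * rho, 1, rho ^ 2]
        : Matrix (Fin 3) (Fin 3) (ZMod p)) = 1 := by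
    ext i j
    fin_cases i <;> fin_cases j <;>
      simp [Matrix.mul_apply, Fin.sum_univ_succ, Matrix.one_apply] <;>
    first
      | ring1
      | linear_combination (1 + rho ^ 2) * ha2 + (-1 + rho - rho ^ 2) * hsum
      | linear_combination (alpha - alpha * rho) * hsum
      | linear_combination ha2
      | linear_combination (-rho) * ha2 + rho * hsum
      | linear_combination rho ^ 2 * ha2
      | linear_combination (-(rho ^ 2)) * ha2
  have hB3sq : (!![1, lam, -iota * lam; lam, 2⁻¹ * lam ^ 2 - 1, -2⁻¹ * lam ^ 2 * iota;
      -iota * lam, -2⁻¹ * lam ^ 2 * iota, -1 - 2⁻¹ * lam ^ 2] *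
      !![1, lam, -iota * lam; lam, 2⁻¹ * lam ^ 2 - 1, -2⁻¹ * lam ^ 2 * iota;
      -iota * lam, -2⁻¹ * lam ^ 2 * iota, -1 - 2⁻¹ * lam ^ 2]
        : Matrix (Fin 3) (Fin 3) (ZMod p)) = 1 := by
    ext i j
    fin_cases i <;> fin_cases j <;>
      simp [Matrix.mul_apply, Fin.sum_univ_succ, Matrix.one_apply] <;>
    first
      | ring1
      | linear_combination lam ^ 2 * hiota
      | linear_combination (-(lam ^ 2)) * hiota
      | linear_combination 2⁻¹ * lam ^ 3 * hiota
      | linear_combination (-(2⁻¹ * lam ^ 3)) * hiota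
      | linear_combination 2⁻¹ ^ 2 * lam ^ 4 * hiota - lam ^ 2 * h2
      | linear_combination (-(2⁻¹ ^ 2 * lam ^ 4)) * hiota + lam ^ 2 * h2
      | linear_combination iota * lam ^ 2 * h2
      | linear_combination (-(iota * lam ^ 2)) * h2
      | linear_combination (lam ^ 2 + 2⁻¹ ^ 2 * lam ^ 4) * hiota + lam ^ 2 * h2
      | linear_combination (-(lam ^ 2 + 2⁻¹ ^ 2 * lam ^ 4)) * hiota - lam ^ 2 * h2
  have hDiag : (diagonal ![(1 : ZMod p), -1, -1] * diagonal ![(1 : ZMod p), -1, -1]) = 1 := by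
    ext i j
    fin_cases i <;> fin_cases j <;>
      simp [Matrix.mul_apply, Fin.sum_univ_succ, Matrix.one_apply, Matrix.diagonal]
  have hCD : (!![-rho, 0, 0; 0, 0, rho; 0, rho, -(1 - rho) * rho ^ 2] *
      !![-rho ^ 2, 0, 0; 0, 1 - rho, rho ^ 2; 0, rho ^ 2, 0]
        : Matrix (Fin 3) (Fin 3) (ZMod p)) = 1 := by
    ext i j
    fin_cases i <;> fin_cases j <;>
      simp [Matrix.mul_apply, Fin.sum_univ_succ, Matrix.one_apply] <;>
    first
      | ring1
      | linear_combination hr3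
      | linear_combination -hr3
      | linear_combination (rho ^ 2 - rho) * hr3
      | linear_combination (rho - rho ^ 2) * hr3
  have hDC : (!![-rho ^ 2, 0, 0; 0, 1 - rho, rho ^ 2; 0, rho ^ 2, 0] *
      !![-rho, 0, 0; 0, 0, rho; 0, rho, -(1 - rho) * rho ^ 2]
        : Matrix (Fin 3) (Fin 3) (ZMod p)) = 1 := by
    ext i j
    fin_cases i <;> fin_cases j <;>
      simp [Matrix.mul_apply, Fin.sum_univ_succ, Matrix.one_apply] <;>
    first
      | ring1
      | linear_combination hr3
      | linear_combination -hr3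
      | linear_combination (rho ^ 2 - rho) * hr3
      | linear_combination (rho - rho ^ 2) * hr3
  have hR12 : (!![rho, 0, 0; 0, a, x; 0, x, b] * !![rho ^ 2, 0, 0; 0, c, y; 0, y, d]
        : Matrix (Fin 3) (Fin 3) (ZMod p)) = 1 := by
    ext i j
    fin_cases i <;> fin_cases j <;>
      simp [Matrix.mul_apply, Fin.sum_univ_succ, Matrix.one_apply] <;>
    first
      | ring1
      | linear_combination hr3
      | linear_combination -hr3
      | linear_combination e1
      | linear_combination -e1
      | linear_combination e2
      | linear_combination -e2
      | linear_combination e3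
      | linear_combination -e3
      | linear_combination e4
      | linear_combination -e4
  have hR21 : (!![rho ^ 2, 0, 0; 0, c, y; 0, y, d] * !![rho, 0, 0; 0, a, x; 0, x, b]
        : Matrix (Fin 3) (Fin 3) (ZMod p)) = 1 := by
    ext i j
    fin_cases i <;> fin_cases j <;>
      simp [Matrix.mul_apply, Fin.sum_univ_succ, Matrix.one_apply] <;>
    first
      | ring1
      | linear_combination hr3
      | linear_combination -hr3
      | linear_combination e1
      | linear_combination -e1
      | linear_combination e2
      | linear_combination -e2
      | linear_combination e3
      | linear_combination -e3
      | linear_combination e4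
      | linear_combination -e4
  have h2x2 : (!![a, x; x, b] * !![c, y; y, d] : Matrix (Fin 2) (Fin 2) (ZMod p)) = 1 := by
    ext i j
    fin_cases i <;> fin_cases j <;>
      simp [Matrix.mul_apply, Fin.sum_univ_succ, Matrix.one_apply] <;>
    first
      | ring1
      | linear_combination e1
      | linear_combination -e1
      | linear_combination e2
      | linear_combination -e2
      | linear_combination e3
      | linear_combination -e3
      | linear_combination e4
      | linear_combination -e4
  intro A1 B3 t1 t2 t3 t4 r
  have ht1sq : t1 * t1 = 1 := by
    show fromBlocks 0 A1 A1 0 * fromBlocks 0 A1 A1 0 = 1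
    rw [fromBlocks_multiply]
    simp only [Matrix.mul_zero, Matrix.zero_mul, add_zero, zero_add]
    rw [show (A1 * A1 : Matrix (Fin 3) (Fin 3) (ZMod p)) = 1 from hA1sq]
    exact fromBlocks_one
  have ht2sq : t2 * t2 = 1 := by
    show fromBlocks _ 0 0 _ * fromBlocks _ 0 0 _ = 1
    rw [fromBlocks_multiply]
    simp only [Matrix.mul_zero, Matrix.zero_mul, add_zero, zero_add]
    rw [hDiag]
    exact fromBlocks_one
  have ht3sq : t3 * t3 = 1 := by
    show fromBlocks B3 0 0 B3 * fromBlocks B3 0 0 B3 = 1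
    rw [fromBlocks_multiply]
    simp only [Matrix.mul_zero, Matrix.zero_mul, add_zero, zero_add]
    rw [show (B3 * B3 : Matrix (Fin 3) (Fin 3) (ZMod p)) = 1 from hB3sq]
    exact fromBlocks_one
  have ht4sq : t4 * t4 = 1 := by
    show fromBlocks 0 _ _ 0 * fromBlocks 0 _ _ 0 = 1
    rw [fromBlocks_multiply]
    simp only [Matrix.mul_zero, Matrix.zero_mul, add_zero, zero_add, Matrix.mul_zero]
    rw [hCD, hDC]
    exact fromBlocks_one
  have hrsq : r * r = 1 := by
    show fromBlocks 0 _ _ 0 * fromBlocks 0 _ _ 0 = 1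
    rw [fromBlocks_multiply]
    simp only [Matrix.mul_zero, Matrix.zero_mul, add_zero, zero_add]
    rw [hR12, hR21]
    exact fromBlocks_one
  have ht1ne : t1 ≠ 1 := by
    intro h
    have h0 := congrFun (congrFun h (Sum.inl 0)) (Sum.inl 0)
    simp [t1, Matrix.fromBlocks, Matrix.one_apply] at h0
  have ht2ne : t2 ≠ 1 := by
    intro h
    have h0 := congrFun (congrFun h (Sum.inl 1)) (Sum.inl 1)
    simp [t2, Matrix.fromBlocks, Matrix.one_apply, Matrix.diagonal] at h0
    exact hp2 (by linear_combination -h0)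
  have ht3ne : t3 ≠ 1 := by
    intro h
    have h0 := congrFun (congrFun h (Sum.inl 0)) (Sum.inl 1)
    simp [t3, B3, Matrix.fromBlocks, Matrix.one_apply] at h0
    exact hlamne h0
  have ht4ne : t4 ≠ 1 := by
    intro h
    have h0 := congrFun (congrFun h (Sum.inl 0)) (Sum.inl 0)
    simp [t4, Matrix.fromBlocks, Matrix.one_apply] at h0
  have hrne : r ≠ 1 := by
    intro h
    have h0 := congrFun (congrFun h (Sum.inl 0)) (Sum.inl 0)
    simp [r, Matrix.fromBlocks, Matrix.one_apply] at h0
  refine ⟨orderOf_eq_prime (by rw [pow_two]; exact ht1sq) ht1ne,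
    orderOf_eq_prime (by rw [pow_two]; exact ht2sq) ht2ne,
    orderOf_eq_prime (by rw [pow_two]; exact ht3sq) ht3ne,
    orderOf_eq_prime (by rw [pow_two]; exact ht4sq) ht4ne,
    orderOf_eq_prime (by rw [pow_two]; exact hrsq) hrne,
    hA1sq, hB3sq, h2x2⟩
end

section
/- With the Section-4 setup, the commuting relations t₁t₃ = t₃t₁, t₁t₄ = t₄t₁ and t₂t₄ = t₄t₂ hold in GL₆(GF(p)). -/
open Matrix

set_option maxHeartbeats 2000000 in
set_option maxHeartbeats 2000000 in
set_option maxHeartbeats 2000000 in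
theorem stmt_16 (p : ℕ) [Fact p.Prime] (hp3 : p % 3 = 1) (hp8 : p % 8 = 5)
    (rho iota alpha lam eps beta gamma delta mu : ZMod p)
    (hrho : orderOf rho = 3)
    (hiota : iota ^ 2 = -1)
    (halpha : alpha ^ 2 = (1 + rho ^ 2)⁻¹)
    (hlam : lam = alpha * (iota + 1) * (-1 + rho - iota * rho ^ 2))
    (heps : eps = -iota * lam)
    (hbeta : beta = -2⁻¹ * lam ^ 2 * iota)
    (hgamma : gamma = 2⁻¹ * lam ^ 2 - 1)
    (hdelta : delta = -1 - 2⁻¹ * lam ^ 2)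
    (hmu : mu = 1 - rho) :
    let A1 : Matrix (Fin 3) (Fin 3) (ZMod p) :=
      !![0, alpha, -alpha * rho; alpha, rho, 1; -alpha * rho, 1, rho ^ 2]
    let B3 : Matrix (Fin 3) (Fin 3) (ZMod p) :=
      !![1, lam, eps; lam, gamma, beta; eps, beta, delta]
    let t1 : Matrix (Fin 3 ⊕ Fin 3) (Fin 3 ⊕ Fin 3) (ZMod p) := fromBlocks 0 A1 A1 0
    let t2 : Matrix (Fin 3 ⊕ Fin 3) (Fin 3 ⊕ Fin 3) (ZMod p) :=
      fromBlocks (diagonal ![(1 : ZMod p), -1, -1]) 0 0 (diagonal ![(1 : ZMod p), -1, -1])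
    let t3 : Matrix (Fin 3 ⊕ Fin 3) (Fin 3 ⊕ Fin 3) (ZMod p) := fromBlocks B3 0 0 B3
    let t4 : Matrix (Fin 3 ⊕ Fin 3) (Fin 3 ⊕ Fin 3) (ZMod p) :=
      fromBlocks 0 !![-rho, 0, 0; 0, 0, rho; 0, rho, -mu * rho ^ 2]
        !![-rho ^ 2, 0, 0; 0, mu, rho ^ 2; 0, rho ^ 2, 0] 0
    t1 * t3 = t3 * t1 ∧ t1 * t4 = t4 * t1 ∧ t2 * t4 = t4 * t2 := by
  have hr3 : rho ^ 3 = 1 := by rw [← hrho]; exact pow_orderOf_eq_one rho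
  have hrne1 : rho ≠ 1 := by
    intro h
    rw [h, orderOf_one] at hrho
    omega
  have hs : rho ^ 2 = -rho - 1 := by
    have hfac : (rho - 1) * (rho ^ 2 + rho + 1) = 0 := by linear_combination hr3
    rcases mul_eq_zero.mp hfac with h | h
    · exact absurd (by linear_combination h) hrne1
    · linear_combination h
  have ha : alpha ^ 2 = 1 + rho := by
    rw [halpha]
    have h2' : (1 + rho ^ 2) * (1 + rho) = 1 := by linear_combination hr3 + hs
    exact inv_eq_of_mul_eq_one_right h2'
  have h2z : (2 : ZMod p) ≠ 0 := by
    intro h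
    have hd : (p : ℕ) ∣ 2 := by
      have := (ZMod.natCast_eq_zero_iff 2 p).mp (by exact_mod_cast h)
      exact this
    have := Nat.le_of_dvd (by norm_num) hd
    omega
  have hh : (2 : ZMod p) * 2⁻¹ = 1 := mul_inv_cancel₀ h2z
  have hi := hiota
  intro A1 B3 t1 t2 t3 t4
  have hAB : A1 * B3 = B3 * A1 := by
    ext i j
    simp only [A1, B3]
    fin_cases i <;> fin_cases j <;>
      simp only [Matrix.mul_apply, Fin.sum_univ_three, Matrix.cons_val', Matrix.cons_val_zero,
        Matrix.cons_val_one, Matrix.head_cons, Matrix.empty_val', Matrix.cons_val_fin_one,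
        Matrix.head_fin_const, Matrix.of_apply, Fin.isValue, Matrix.cons_val_zero',
        Matrix.cons_val_two, Matrix.cons_val_succ, Matrix.cons_val_succ', Matrix.tail_cons, Fin.mk_zero, Fin.mk_one]
    · ring
    · linear_combination ((-1)) * heps + ((-1)*alpha*rho) * hbeta + ((1)*alpha) * hgamma + ((-1)*rho + (1)*iota + (1)*alpha*(2:ZMod p)⁻¹*lam + (1)*alpha*iota*rho*(2:ZMod p)⁻¹*lam + (-1)*alpha^2*(2:ZMod p)⁻¹ + (1)*alpha^2*rho*(2:ZMod p)⁻¹ + (-1)*alpha^2*iota*(2:ZMod p)⁻¹ + (-1)*alpha^2*iota^2*rho*(2:ZMod p)⁻¹ + (-1)*alpha^2*iota^2*rho^3*(2:ZMod p)⁻¹ + (-1)*alpha^2*iota^3*rho^3*(2:ZMod p)⁻¹) * hlam + ((-1)*alpha + (1)*alpha*rho + (-1)*alpha*rho^2 + (1)*alpha*rho^3 + (-1)*alpha*iota*rho^2 + (1)*alpha^3*(2:ZMod p)⁻¹ + (1)*alpha^3*rho^2*(2:ZMod p)⁻¹ + (-2)*alpha^3*rho^3*(2:ZMod p)⁻¹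 + (-2)*alpha^3*rho^5*(2:ZMod p)⁻¹ + (1)*alpha^3*iota*rho*(2:ZMod p)⁻¹ + (3)*alpha^3*iota*rho^3*(2:ZMod p)⁻¹ + (-2)*alpha^3*iota*rho^4*(2:ZMod p)⁻¹ + (2)*alpha^3*iota^2*rho^3*(2:ZMod p)⁻¹ + (-1)*alpha^3*iota^2*rho^4*(2:ZMod p)⁻¹ + (2)*alpha^3*iota^2*rho^5*(2:ZMod p)⁻¹ + (1)*alpha^3*iota^3*rho^5*(2:ZMod p)⁻¹) * hi + ((-2)*alpha*rho*(2:ZMod p)⁻¹ + (2)*alpha*rho^3*(2:ZMod p)⁻¹ + (2)*alpha*rho^5*(2:ZMod p)⁻¹ + (2)*alpha*iota*(2:ZMod p)⁻¹ + (-4)*alpha*iota*rho*(2:ZMod p)⁻¹ + (2)*alpha*iota*rho^2*(2:ZMod p)⁻¹ + (-4)*alpha*iota*rho^3*(2:ZMod p)⁻¹ + (2)*alpha*iota*rho^4*(2:ZMod p)⁻¹) * ha + ((1)*alpha + (-4)*alpha*(2:ZMod p)⁻¹ + (-1)*alpha*rho + (2)*alpha*rho*(2:ZMod p)⁻¹ +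 (2)*alpha*rho^4*(2:ZMod p)⁻¹ + (-1)*alpha*iota + (2)*alpha*iota*(2:ZMod p)⁻¹ + (1)*alpha*iota*rho + (-4)*alpha*iota*rho^2*(2:ZMod p)⁻¹ + (2)*alpha*iota*rho^3*(2:ZMod p)⁻¹) * hs + ((2)*alpha + (-2)*alpha*iota*rho) * hh
    · linear_combination ((-1)*rho^2) * heps + ((1)*alpha) * hbeta + ((-1)*alpha*rho) * hdelta + ((-1) + (1)*iota*rho^2 + (1)*alpha*rho*(2:ZMod p)⁻¹*lam + (-1)*alpha*iota*(2:ZMod p)⁻¹*lam + (-1)*alpha^2*rho*(2:ZMod p)⁻¹ + (1)*alpha^2*rho^2*(2:ZMod p)⁻¹ + (1)*alpha^2*iota*(2:ZMod p)⁻¹ + (-2)*alpha^2*iota*rho*(2:ZMod p)⁻¹ + (1)*alpha^2*iota*rho^2*(2:ZMod p)⁻¹ + (-1)*alpha^2*iota*rho^3*(2:ZMod p)⁻¹ + (1)*alpha^2*iota^2*(2:ZMod p)⁻¹ + (-1)*alpha^2*iota^2*rho*(2:ZMod p)⁻¹ + (1)*alpha^2*iota^2*rho^2*(2:ZMod p)⁻¹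 + (-1)*alpha^2*iota^2*rho^3*(2:ZMod p)⁻¹ + (1)*alpha^2*iota^3*rho^2*(2:ZMod p)⁻¹) * hlam + ((1)*alpha*rho^3 + (-1)*alpha*rho^4 + (-1)*alpha*iota*rho^4 + (-2)*alpha^3*(2:ZMod p)⁻¹ + (5)*alpha^3*rho*(2:ZMod p)⁻¹ + (-4)*alpha^3*rho^2*(2:ZMod p)⁻¹ + (5)*alpha^3*rho^3*(2:ZMod p)⁻¹ + (-2)*alpha^3*rho^4*(2:ZMod p)⁻¹ + (-1)*alpha^3*iota*(2:ZMod p)⁻¹ + (2)*alpha^3*iota*rho*(2:ZMod p)⁻¹ + (-5)*alpha^3*iota*rho^2*(2:ZMod p)⁻¹ + (6)*alpha^3*iota*rho^3*(2:ZMod p)⁻¹ + (-2)*alpha^3*iota*rho^4*(2:ZMod p)⁻¹ + (2)*alpha^3*iota*rho^5*(2:ZMod p)⁻¹ + (-2)*alpha^3*iota^2*rho^2*(2:ZMod p)⁻¹ + (2)*alpha^3*iota^2*rho^3*(2:ZMod p)⁻¹ + (-2)*alpha^3*iota^2*rho^4*(2:ZMod p)⁻¹ + (1)*alpha^3*iota^2*rho^5*(2:ZMod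 p)⁻¹ + (-1)*alpha^3*iota^3*rho^4*(2:ZMod p)⁻¹) * hi + ((2)*alpha*(2:ZMod p)⁻¹ + (-4)*alpha*rho*(2:ZMod p)⁻¹ + (2)*alpha*rho^2*(2:ZMod p)⁻¹ + (-4)*alpha*rho^3*(2:ZMod p)⁻¹ + (2)*alpha*rho^4*(2:ZMod p)⁻¹ + (2)*alpha*iota*rho*(2:ZMod p)⁻¹ + (-2)*alpha*iota*rho^3*(2:ZMod p)⁻¹ + (-2)*alpha*iota*rho^5*(2:ZMod p)⁻¹) * ha + ((1)*alpha + (2)*alpha*(2:ZMod p)⁻¹ + (-2)*alpha*rho + (1)*alpha*rho^2 + (-4)*alpha*rho^2*(2:ZMod p)⁻¹ + (2)*alpha*rho^3*(2:ZMod p)⁻¹ + (-1)*alpha*iota + (4)*alpha*iota*(2:ZMod p)⁻¹ + (-2)*alpha*iota*rho*(2:ZMod p)⁻¹ + (1)*alpha*iota*rho^2 + (-2)*alpha*iota*rho^4*(2:ZMod p)⁻¹) * hs + ((-2)*alpha*rho + (-2)*alpha*iota) * hh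
    · linear_combination ((1)) * heps + ((1)*alpha*rho) * hbeta + ((-1)*alpha) * hgamma + ((1)*rho + (-1)*iota + (-1)*alpha*(2:ZMod p)⁻¹*lam + (-1)*alpha*iota*rho*(2:ZMod p)⁻¹*lam + (1)*alpha^2*(2:ZMod p)⁻¹ + (-1)*alpha^2*rho*(2:ZMod p)⁻¹ + (1)*alpha^2*iota*(2:ZMod p)⁻¹ + (1)*alpha^2*iota^2*rho*(2:ZMod p)⁻¹ + (1)*alpha^2*iota^2*rho^3*(2:ZMod p)⁻¹ + (1)*alpha^2*iota^3*rho^3*(2:ZMod p)⁻¹) * hlam + ((1)*alpha + (-1)*alpha*rho + (1)*alpha*rho^2 + (-1)*alpha*rho^3 + (1)*alpha*iota*rho^2 + (-1)*alpha^3*(2:ZMod p)⁻¹ + (-1)*alpha^3*rho^2*(2:ZMod p)⁻¹ + (2)*alpha^3*rho^3*(2:ZMod p)⁻¹ + (2)*alpha^3*rho^5*(2:ZMod p)⁻¹ + (-1)*alpha^3*iota*rho*(2:ZMod p)⁻¹ + (-3)*alpha^3*iota*rho^3*(2:ZMod p)⁻¹ + (2)*alpha^3*iota*rho^4*(2:ZMod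 p)⁻¹ + (-2)*alpha^3*iota^2*rho^3*(2:ZMod p)⁻¹ + (1)*alpha^3*iota^2*rho^4*(2:ZMod p)⁻¹ + (-2)*alpha^3*iota^2*rho^5*(2:ZMod p)⁻¹ + (-1)*alpha^3*iota^3*rho^5*(2:ZMod p)⁻¹) * hi + ((2)*alpha*rho*(2:ZMod p)⁻¹ + (-2)*alpha*rho^3*(2:ZMod p)⁻¹ + (-2)*alpha*rho^5*(2:ZMod p)⁻¹ + (-2)*alpha*iota*(2:ZMod p)⁻¹ + (4)*alpha*iota*rho*(2:ZMod p)⁻¹ + (-2)*alpha*iota*rho^2*(2:ZMod p)⁻¹ + (4)*alpha*iota*rho^3*(2:ZMod p)⁻¹ + (-2)*alpha*iota*rho^4*(2:ZMod p)⁻¹) * ha + ((-1)*alpha + (4)*alpha*(2:ZMod p)⁻¹ + (1)*alpha*rho + (-2)*alpha*rho*(2:ZMod p)⁻¹ + (-2)*alpha*rho^4*(2:ZMod p)⁻¹ + (1)*alpha*iota + (-2)*alpha*iota*(2:ZMod p)⁻¹ + (-1)*alpha*iota*rho + (4)*alpha*iota*rho^2*(2:ZMod p)⁻¹ + (-2)*alpha*iota*rho^3*(2:ZMod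 p)⁻¹) * hs + ((-2)*alpha + (2)*alpha*iota*rho) * hh
    · ring
    · linear_combination ((1)*alpha) * heps + ((1)*rho + (-1)*rho^2) * hbeta + ((-1)) * hgamma + ((1)) * hdelta + ((-2)*(2:ZMod p)⁻¹*lam + (-1)*iota*rho*(2:ZMod p)⁻¹*lam + (1)*iota*rho^2*(2:ZMod p)⁻¹*lam + (2)*alpha*(2:ZMod p)⁻¹ + (1)*alpha*rho + (-2)*alpha*rho*(2:ZMod p)⁻¹ + (-1)*alpha*iota + (2)*alpha*iota*(2:ZMod p)⁻¹ + (-1)*alpha*iota*rho*(2:ZMod p)⁻¹ + (1)*alpha*iota*rho^3*(2:ZMod p)⁻¹ + (1)*alpha*iota^2*rho*(2:ZMod p)⁻¹ + (2)*alpha*iota^2*rho^3*(2:ZMod p)⁻¹ + (-1)*alpha*iota^2*rho^4*(2:ZMod p)⁻¹ + (1)*alpha*iota^3*rho^3*(2:ZMod p)⁻¹ + (-1)*alpha*iota^3*rho^4*(2:ZMod p)⁻¹) * hlam + ((1)*alpha^2 + (-2)*alpha^2*(2:ZMod p)⁻¹ + (-1)*alpha^2*rho + (2)*alpha^2*rho*(2:ZMod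 p)⁻¹ + (1)*alpha^2*rho^2 + (-4)*alpha^2*rho^2*(2:ZMod p)⁻¹ + (-1)*alpha^2*rho^3 + (2)*alpha^2*rho^3*(2:ZMod p)⁻¹ + (2)*alpha^2*rho^4*(2:ZMod p)⁻¹ + (2)*alpha^2*rho^5*(2:ZMod p)⁻¹ + (-2)*alpha^2*rho^6*(2:ZMod p)⁻¹ + (-1)*alpha^2*iota*rho*(2:ZMod p)⁻¹ + (1)*alpha^2*iota*rho^2 + (-1)*alpha^2*iota*rho^2*(2:ZMod p)⁻¹ + (-3)*alpha^2*iota*rho^3*(2:ZMod p)⁻¹ + (5)*alpha^2*iota*rho^4*(2:ZMod p)⁻¹ + (-4)*alpha^2*iota*rho^5*(2:ZMod p)⁻¹ + (-2)*alpha^2*iota^2*rho^3*(2:ZMod p)⁻¹ + (2)*alpha^2*iota^2*rho^4*(2:ZMod p)⁻¹ + (-4)*alpha^2*iota^2*rho^5*(2:ZMod p)⁻¹ + (2)*alpha^2*iota^2*rho^6*(2:ZMod p)⁻¹ + (-1)*alpha^2*iota^3*rho^5*(2:ZMod p)⁻¹ + (1)*alpha^2*iota^3*rho^6*(2:ZMod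 p)⁻¹) * hi + ((-1) + (2)*rho*(2:ZMod p)⁻¹ + (2)*rho^2*(2:ZMod p)⁻¹ + (1)*rho^3 + (-2)*rho^3*(2:ZMod p)⁻¹ + (-2)*rho^4*(2:ZMod p)⁻¹ + (-2)*rho^5*(2:ZMod p)⁻¹ + (2)*rho^6*(2:ZMod p)⁻¹ + (1)*iota + (-4)*iota*(2:ZMod p)⁻¹ + (-2)*iota*rho + (8)*iota*rho*(2:ZMod p)⁻¹ + (-4)*iota*rho^2*(2:ZMod p)⁻¹ + (-1)*iota*rho^3 + (4)*iota*rho^3*(2:ZMod p)⁻¹ + (-4)*iota*rho^4*(2:ZMod p)⁻¹ + (4)*iota*rho^5*(2:ZMod p)⁻¹) * ha + ((-1) + (2)*rho*(2:ZMod p)⁻¹ + (1)*rho^2 + (2)*rho^2*(2:ZMod p)⁻¹ + (-4)*rho^3*(2:ZMod p)⁻¹ + (-2)*rho^4*(2:ZMod p)⁻¹ + (2)*rho^5*(2:ZMod p)⁻¹ + (-1)*iota + (4)*iota*rho*(2:ZMod p)⁻¹ + (-1)*iota*rho^2 + (-4)*iota*rho^3*(2:ZMod p)⁻¹ + (4)*iota*rho^4*(2:ZMod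 p)⁻¹) * hs + ((-2)*iota) * hh
    · linear_combination ((1)*rho^2) * heps + ((-1)*alpha) * hbeta + ((1)*alpha*rho) * hdelta + ((1) + (-1)*iota*rho^2 + (-1)*alpha*rho*(2:ZMod p)⁻¹*lam + (1)*alpha*iota*(2:ZMod p)⁻¹*lam + (1)*alpha^2*rho*(2:ZMod p)⁻¹ + (-1)*alpha^2*rho^2*(2:ZMod p)⁻¹ + (-1)*alpha^2*iota*(2:ZMod p)⁻¹ + (2)*alpha^2*iota*rho*(2:ZMod p)⁻¹ + (-1)*alpha^2*iota*rho^2*(2:ZMod p)⁻¹ + (1)*alpha^2*iota*rho^3*(2:ZMod p)⁻¹ + (-1)*alpha^2*iota^2*(2:ZMod p)⁻¹ + (1)*alpha^2*iota^2*rho*(2:ZMod p)⁻¹ + (-1)*alpha^2*iota^2*rho^2*(2:ZMod p)⁻¹ + (1)*alpha^2*iota^2*rho^3*(2:ZMod p)⁻¹ + (-1)*alpha^2*iota^3*rho^2*(2:ZMod p)⁻¹) * hlam + ((-1)*alpha*rho^3 + (1)*alpha*rho^4 + (1)*alpha*iota*rho^4 + (2)*alpha^3*(2:ZMod p)⁻¹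 + (-5)*alpha^3*rho*(2:ZMod p)⁻¹ + (4)*alpha^3*rho^2*(2:ZMod p)⁻¹ + (-5)*alpha^3*rho^3*(2:ZMod p)⁻¹ + (2)*alpha^3*rho^4*(2:ZMod p)⁻¹ + (1)*alpha^3*iota*(2:ZMod p)⁻¹ + (-2)*alpha^3*iota*rho*(2:ZMod p)⁻¹ + (5)*alpha^3*iota*rho^2*(2:ZMod p)⁻¹ + (-6)*alpha^3*iota*rho^3*(2:ZMod p)⁻¹ + (2)*alpha^3*iota*rho^4*(2:ZMod p)⁻¹ + (-2)*alpha^3*iota*rho^5*(2:ZMod p)⁻¹ + (2)*alpha^3*iota^2*rho^2*(2:ZMod p)⁻¹ + (-2)*alpha^3*iota^2*rho^3*(2:ZMod p)⁻¹ + (2)*alpha^3*iota^2*rho^4*(2:ZMod p)⁻¹ + (-1)*alpha^3*iota^2*rho^5*(2:ZMod p)⁻¹ + (1)*alpha^3*iota^3*rho^4*(2:ZMod p)⁻¹) * hi + ((-2)*alpha*(2:ZMod p)⁻¹ + (4)*alpha*rho*(2:ZMod p)⁻¹ + (-2)*alpha*rho^2*(2:ZMod p)⁻¹ + (4)*alpha*rho^3*(2:ZMod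 p)⁻¹ + (-2)*alpha*rho^4*(2:ZMod p)⁻¹ + (-2)*alpha*iota*rho*(2:ZMod p)⁻¹ + (2)*alpha*iota*rho^3*(2:ZMod p)⁻¹ + (2)*alpha*iota*rho^5*(2:ZMod p)⁻¹) * ha + ((-1)*alpha + (-2)*alpha*(2:ZMod p)⁻¹ + (2)*alpha*rho + (-1)*alpha*rho^2 + (4)*alpha*rho^2*(2:ZMod p)⁻¹ + (-2)*alpha*rho^3*(2:ZMod p)⁻¹ + (1)*alpha*iota + (-4)*alpha*iota*(2:ZMod p)⁻¹ + (2)*alpha*iota*rho*(2:ZMod p)⁻¹ + (-1)*alpha*iota*rho^2 + (2)*alpha*iota*rho^4*(2:ZMod p)⁻¹) * hs + ((2)*alpha*rho + (2)*alpha*iota) * hh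
    · linear_combination ((-1)*alpha) * heps + ((-1)*rho + (1)*rho^2) * hbeta + ((1)) * hgamma + ((-1)) * hdelta + ((2)*(2:ZMod p)⁻¹*lam + (1)*iota*rho*(2:ZMod p)⁻¹*lam + (-1)*iota*rho^2*(2:ZMod p)⁻¹*lam + (-2)*alpha*(2:ZMod p)⁻¹ + (-1)*alpha*rho + (2)*alpha*rho*(2:ZMod p)⁻¹ + (1)*alpha*iota + (-2)*alpha*iota*(2:ZMod p)⁻¹ + (1)*alpha*iota*rho*(2:ZMod p)⁻¹ + (-1)*alpha*iota*rho^3*(2:ZMod p)⁻¹ + (-1)*alpha*iota^2*rho*(2:ZMod p)⁻¹ + (-2)*alpha*iota^2*rho^3*(2:ZMod p)⁻¹ + (1)*alpha*iota^2*rho^4*(2:ZMod p)⁻¹ + (-1)*alpha*iota^3*rho^3*(2:ZMod p)⁻¹ + (1)*alpha*iota^3*rho^4*(2:ZMod p)⁻¹) * hlam + ((-1)*alpha^2 + (2)*alpha^2*(2:ZMod p)⁻¹ + (1)*alpha^2*rho + (-2)*alpha^2*rho*(2:ZMod p)⁻¹ + (-1)*alpha^2*rho^2 + (4)*alpha^2*rho^2*(2:ZMod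 p)⁻¹ + (1)*alpha^2*rho^3 + (-2)*alpha^2*rho^3*(2:ZMod p)⁻¹ + (-2)*alpha^2*rho^4*(2:ZMod p)⁻¹ + (-2)*alpha^2*rho^5*(2:ZMod p)⁻¹ + (2)*alpha^2*rho^6*(2:ZMod p)⁻¹ + (1)*alpha^2*iota*rho*(2:ZMod p)⁻¹ + (-1)*alpha^2*iota*rho^2 + (1)*alpha^2*iota*rho^2*(2:ZMod p)⁻¹ + (3)*alpha^2*iota*rho^3*(2:ZMod p)⁻¹ + (-5)*alpha^2*iota*rho^4*(2:ZMod p)⁻¹ + (4)*alpha^2*iota*rho^5*(2:ZMod p)⁻¹ + (2)*alpha^2*iota^2*rho^3*(2:ZMod p)⁻¹ + (-2)*alpha^2*iota^2*rho^4*(2:ZMod p)⁻¹ + (4)*alpha^2*iota^2*rho^5*(2:ZMod p)⁻¹ + (-2)*alpha^2*iota^2*rho^6*(2:ZMod p)⁻¹ + (1)*alpha^2*iota^3*rho^5*(2:ZMod p)⁻¹ + (-1)*alpha^2*iota^3*rho^6*(2:ZMod p)⁻¹) * hi + ((1) + (-2)*rho*(2:ZMod p)⁻¹ + (-2)*rho^2*(2:ZMod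 p)⁻¹ + (-1)*rho^3 + (2)*rho^3*(2:ZMod p)⁻¹ + (2)*rho^4*(2:ZMod p)⁻¹ + (2)*rho^5*(2:ZMod p)⁻¹ + (-2)*rho^6*(2:ZMod p)⁻¹ + (-1)*iota + (4)*iota*(2:ZMod p)⁻¹ + (2)*iota*rho + (-8)*iota*rho*(2:ZMod p)⁻¹ + (4)*iota*rho^2*(2:ZMod p)⁻¹ + (1)*iota*rho^3 + (-4)*iota*rho^3*(2:ZMod p)⁻¹ + (4)*iota*rho^4*(2:ZMod p)⁻¹ + (-4)*iota*rho^5*(2:ZMod p)⁻¹) * ha + ((1) + (-2)*rho*(2:ZMod p)⁻¹ + (-1)*rho^2 + (-2)*rho^2*(2:ZMod p)⁻¹ + (4)*rho^3*(2:ZMod p)⁻¹ + (2)*rho^4*(2:ZMod p)⁻¹ + (-2)*rho^5*(2:ZMod p)⁻¹ + (1)*iota + (-4)*iota*rho*(2:ZMod p)⁻¹ + (1)*iota*rho^2 + (4)*iota*rho^3*(2:ZMod p)⁻¹ + (-4)*iota*rho^4*(2:ZMod p)⁻¹) * hs + ((2)*iota) * hh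
    · ring
  have hAD : A1 * !![-rho ^ 2, 0, 0; 0, mu, rho ^ 2; 0, rho ^ 2, 0] =
      !![-rho, 0, 0; 0, 0, rho; 0, rho, -(mu * rho ^ 2)] * A1 := by
    ext i j
    simp only [A1]
    fin_cases i <;> fin_cases j <;>
      simp only [Matrix.mul_apply, Fin.sum_univ_three, Matrix.cons_val', Matrix.cons_val_zero,
        Matrix.cons_val_one, Matrix.head_cons, Matrix.empty_val', Matrix.cons_val_fin_one,
        Matrix.head_fin_const, Matrix.of_apply, Fin.isValue, Matrix.cons_val_zero',
        Matrix.cons_val_two, Matrix.cons_val_succ, Matrix.cons_val_succ', Matrix.tail_cons, Fin.mk_zero, Fin.mk_one]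
    · ring
    · linear_combination ((1)*alpha) * hmu + ((1)*alpha + (-1)*alpha*rho) * hs
    · ring
    · ring
    · linear_combination ((1)*rho) * hmu
    · ring
    · linear_combination ((-1)*alpha*rho^3) * hmu + ((-1)*alpha*rho + (1)*alpha*rho^2) * hs
    · linear_combination ((1) + (1)*rho^2) * hmu + ((1) + (-2)*rho + (1)*rho^2) * hs
    · linear_combination ((1)*rho^4) * hmu + ((-1)*rho + (2)*rho^2 + (-1)*rho^3) * hs
  have hAC : A1 * !![-rho, 0, 0; 0, 0, rho; 0, rho, -(mu * rho ^ 2)] =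
      !![-rho ^ 2, 0, 0; 0, mu, rho ^ 2; 0, rho ^ 2, 0] * A1 := by
    ext i j
    simp only [A1]
    fin_cases i <;> fin_cases j <;>
      simp only [Matrix.mul_apply, Fin.sum_univ_three, Matrix.cons_val', Matrix.cons_val_zero,
        Matrix.cons_val_one, Matrix.head_cons, Matrix.empty_val', Matrix.cons_val_fin_one,
        Matrix.head_fin_const, Matrix.of_apply, Fin.isValue, Matrix.cons_val_zero',
        Matrix.cons_val_two, Matrix.cons_val_succ, Matrix.cons_val_succ', Matrix.tail_cons, Fin.mk_zero, Fin.mk_one]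
    · ring
    · ring
    · linear_combination ((1)*alpha*rho^3) * hmu + ((1)*alpha*rho + (-1)*alpha*rho^2) * hs
    · linear_combination ((-1)*alpha) * hmu + ((-1)*alpha + (1)*alpha*rho) * hs
    · linear_combination ((-1)*rho) * hmu
    · linear_combination ((-1) + (-1)*rho^2) * hmu + ((-1) + (2)*rho + (-1)*rho^2) * hs
    · ring
    · ring
    · linear_combination ((-1)*rho^4) * hmu + ((1)*rho + (-2)*rho^2 + (1)*rho^3) * hs
  have hdiag : (diagonal ![(1 : ZMod p), -1, -1]) = !![1, 0, 0; 0, -1, 0; 0, 0, -1] := by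
    ext i j
    fin_cases i <;> fin_cases j <;> simp [Matrix.diagonal, Matrix.vecHead, Matrix.vecTail]
  have hEC : diagonal ![(1 : ZMod p), -1, -1] * !![-rho, 0, 0; 0, 0, rho; 0, rho, -(mu * rho ^ 2)] =
      !![-rho, 0, 0; 0, 0, rho; 0, rho, -(mu * rho ^ 2)] * diagonal ![(1 : ZMod p), -1, -1] := by
    rw [hdiag]
    ext i j
    fin_cases i <;> fin_cases j <;>
      simp only [Matrix.mul_apply, Fin.sum_univ_three, Matrix.cons_val', Matrix.cons_val_zero,
        Matrix.cons_val_one, Matrix.head_cons, Matrix.empty_val', Matrix.cons_val_fin_one,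
        Matrix.head_fin_const, Matrix.of_apply, Fin.isValue, Matrix.cons_val_zero',
        Matrix.cons_val_two, Matrix.cons_val_succ, Matrix.cons_val_succ', Matrix.tail_cons, Fin.mk_zero, Fin.mk_one]
    all_goals ring
  have hED : diagonal ![(1 : ZMod p), -1, -1] * !![-rho ^ 2, 0, 0; 0, mu, rho ^ 2; 0, rho ^ 2, 0] =
      !![-rho ^ 2, 0, 0; 0, mu, rho ^ 2; 0, rho ^ 2, 0] * diagonal ![(1 : ZMod p), -1, -1] := by
    rw [hdiag]
    ext i j
    fin_cases i <;> fin_cases j <;>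
      simp only [Matrix.mul_apply, Fin.sum_univ_three, Matrix.cons_val', Matrix.cons_val_zero,
        Matrix.cons_val_one, Matrix.head_cons, Matrix.empty_val', Matrix.cons_val_fin_one,
        Matrix.head_fin_const, Matrix.of_apply, Fin.isValue, Matrix.cons_val_zero',
        Matrix.cons_val_two, Matrix.cons_val_succ, Matrix.cons_val_succ', Matrix.tail_cons, Fin.mk_zero, Fin.mk_one]
    all_goals ring
  refine ⟨?_, ?_, ?_⟩
  · show fromBlocks 0 A1 A1 0 * fromBlocks B3 0 0 B3 = fromBlocks B3 0 0 B3 * fromBlocks 0 A1 A1 0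
    simp only [Matrix.fromBlocks_multiply, hAB, Matrix.zero_mul, Matrix.mul_zero,
      zero_add, add_zero]
  · show fromBlocks 0 A1 A1 0 * fromBlocks 0 _ _ 0 = fromBlocks 0 _ _ 0 * fromBlocks 0 A1 A1 0
    rw [show (!![-rho, 0, 0; 0, 0, rho; 0, rho, -mu * rho ^ 2] : Matrix (Fin 3) (Fin 3) (ZMod p)) = !![-rho, 0, 0; 0, 0, rho; 0, rho, -(mu * rho ^ 2)] by rw [neg_mul]]
    simp only [Matrix.fromBlocks_multiply, hAD, hAC, Matrix.zero_mul, Matrix.mul_zero,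
      zero_add, add_zero]
  · show fromBlocks (diagonal ![(1 : ZMod p), -1, -1]) 0 0 (diagonal ![(1 : ZMod p), -1, -1]) * fromBlocks 0 _ _ 0
      = fromBlocks 0 _ _ 0 * fromBlocks (diagonal ![(1 : ZMod p), -1, -1]) 0 0 (diagonal ![(1 : ZMod p), -1, -1])
    rw [show (!![-rho, 0, 0; 0, 0, rho; 0, rho, -mu * rho ^ 2] : Matrix (Fin 3) (Fin 3) (ZMod p)) = !![-rho, 0, 0; 0, 0, rho; 0, rho, -(mu * rho ^ 2)] by rw [neg_mul]]
    simp only [Matrix.fromBlocks_multiply, hEC, hED, Matrix.zero_mul, Matrix.mul_zero,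
      zero_add, add_zero]
end
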